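/- arXiv:1409.7496 — 10 statements merged into one kernel-verified Lean document; each statement's English description precedes it below -/
import Mathlib

section
/- Let D₁ and D₂ be open connected subsets of ℂ with nonempty intersection such that D₁ ∪ D₂ is simply connected. Then D₁ ∩ D₂ is connected. -/
open Complex Set Metric

/-- Projection of a planar set onto the imaginary axis. -/
def Py (D : Set ℂ) : Set ℝ := {a : ℝ | ∃ z ∈ D, z.im = a}

/-- `Λ_y(D)`: imaginary parts `a` such that the horizontal slice of `D` at height `a`
is nonempty and connected. -/
def Ly (D : Set ℂ) : Set ℝ := {a : ℝ | IsConnected (D ∩ {z : ℂ | z.im = a})}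

/-- Convexity in the direction of the real axis. -/
def CvxRe (D : Set ℂ) : Prop :=
  ∀ z ∈ D, ∀ w ∈ D, z.im = w.im → segment ℝ z w ⊆ D

/-- Local injectivity of `q` on `S`. -/
def LocInjOn (q : ℂ → ℂ) (S : Set ℂ) : Prop :=
  ∀ z ∈ S, ∃ U ∈ nhdsWithin z S, Set.InjOn q U

namespace JanAux

open Classical in
noncomputable def chi (A : Set ℂ) (z : ℂ) : ℤ := if z ∈ A then 1 else 0

def sgn (b : Bool) : ℤ := if b then 1 else -1
def nu (b : Bool) : ℤ := if b then 0 else 1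

noncomputable def W (A : Set ℂ) (N : ℕ) (e : ℕ → Bool) (v : ℕ → ℂ) : ℤ :=
  ∑ i ∈ Finset.range (N + 1), if e i = e (i + 1) then 0 else sgn (e i) * chi A (v i)

def ext (N : ℕ) (c : ℕ → Bool) (i : ℕ) : Bool := if 1 ≤ i ∧ i ≤ N then c i else true

lemma term_eq (x y : Bool) (m : ℤ) :
    (if x = y then 0 else sgn x * m) = m * (nu y - nu x) := by
  cases x <;> cases y <;> simp [sgn, nu] <;> try ring

lemma W_congr (A : Set ℂ) (N : ℕ) (e : ℕ → Bool) (v v' : ℕ → ℂ)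
    (h : ∀ i, i ≤ N → e i ≠ e (i + 1) → chi A (v i) = chi A (v' i)) :
    W A N e v = W A N e v' := by
  unfold W
  refine Finset.sum_congr rfl fun i hi => ?_
  by_cases he : e i = e (i + 1)
  · simp [he]
  · rw [if_neg he, if_neg he, h i (Nat.lt_succ_iff.mp (Finset.mem_range.mp hi)) he]

lemma W_flip (A : Set ℂ) (N : ℕ) (e e' : ℕ → Bool) (v : ℕ → ℂ) (k : ℕ)
    (hk1 : 1 ≤ k) (hkN : k ≤ N)
    (h : ∀ i, i ≠ k → e' i = e i)
    (hχ : chi A (v (k - 1)) = chi A (v k)) :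
    W A N e' v = W A N e v := by
  have hsub : ({k - 1, k} : Finset ℕ) ⊆ Finset.range (N + 1) := by
    intro i hi
    simp only [Finset.mem_insert, Finset.mem_singleton] at hi
    rcases hi with h | h <;> (subst h; exact Finset.mem_range.mpr (by omega))
  have key : W A N e' v - W A N e v
      = ∑ i ∈ ({k - 1, k} : Finset ℕ),
          ((if e' i = e' (i + 1) then 0 else sgn (e' i) * chi A (v i))
            - (if e i = e (i + 1) then 0 else sgn (e i) * chi A (v i))) := by
    unfold W
    rw [← Finset.sum_sub_distrib]
    refine (Finset.sum_subset hsub ?_).symm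
    intro i _ hni
    simp only [Finset.mem_insert, Finset.mem_singleton, not_or] at hni
    rw [h i hni.2, h (i + 1) (by omega)]
    ring
  rw [Finset.sum_pair (by omega : k - 1 ≠ k)] at key
  have hk1' : k - 1 + 1 = k := by omega
  rw [hk1', h (k - 1) (by omega), h (k + 1) (by omega), hχ] at key
  suffices hz : W A N e' v - W A N e v = 0 by linarith
  rw [key]
  generalize e (k - 1) = a1
  generalize e' k = b2
  generalize e k = b1
  generalize e (k + 1) = c1
  cases a1 <;> cases b1 <;> cases b2 <;> cases c1 <;> simp [sgn] <;> try ring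

lemma ext_congr (N : ℕ) (c d : ℕ → Bool) (h : ∀ i, 1 ≤ i → i ≤ N → c i = d i) :
    ext N c = ext N d := by
  funext i
  unfold ext
  split_ifs with h1
  · exact h i h1.1 h1.2
  · rfl

lemma W_exchange (A : Set ℂ) (N : ℕ) (v : ℕ → ℂ) (c d : ℕ → Bool)
    (h : ∀ k, 1 ≤ k → k ≤ N → c k ≠ d k → chi A (v (k - 1)) = chi A (v k)) :
    W A N (ext N c) v = W A N (ext N d) v := by
  have main : ∀ j, W A N (ext N (fun i => if i ≤ j then d i else c i)) v
      = W A N (ext N c) v := by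
    intro j
    induction j with
    | zero =>
      rw [ext_congr N _ c (fun i h1 h2 => if_neg (by omega))]
    | succ j ih =>
      by_cases hj : j + 1 ≤ N
      · by_cases hcd : c (j + 1) = d (j + 1)
        · rw [← ih]
          congr 1
          refine ext_congr N _ _ (fun i h1 h2 => ?_)
          show (if i ≤ j + 1 then d i else c i) = (if i ≤ j then d i else c i)
          by_cases hij : i ≤ j
          · rw [if_pos (by omega), if_pos hij]
          · by_cases hij' : i ≤ j + 1
            · have hi : i = j + 1 := by omega
              subst hi
              rw [if_pos le_rfl, if_neg hij, hcd]
            · rw [if_neg hij', if_neg hij]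
        · rw [← ih]
          refine W_flip A N _ _ v (j + 1) (by omega) hj ?_ (h (j + 1) (by omega) hj hcd)
          intro i hi
          unfold ext
          show (if 1 ≤ i ∧ i ≤ N then (if i ≤ j + 1 then d i else c i) else true)
              = (if 1 ≤ i ∧ i ≤ N then (if i ≤ j then d i else c i) else true)
          by_cases h1 : 1 ≤ i ∧ i ≤ N
          · rw [if_pos h1, if_pos h1]
            by_cases hij : i ≤ j
            · rw [if_pos (by omega), if_pos hij]
            · rw [if_neg (by omega), if_neg hij]
          · rw [if_neg h1, if_neg h1]
      · rw [← ih]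
        congr 1
        refine ext_congr N _ _ (fun i h1 h2 => ?_)
        show (if i ≤ j + 1 then d i else c i) = (if i ≤ j then d i else c i)
        rw [if_pos (by omega), if_pos (by omega)]
  have hN := main N
  rw [← hN]
  congr 1
  exact ext_congr N _ d (fun i h1 h2 => if_pos h2)

lemma W_zero (A : Set ℂ) (N : ℕ) (e : ℕ → Bool) (v : ℕ → ℂ)
    (h1 : ∀ i, i ≤ N → chi A (v i) = 1)
    (h0 : e 0 = true) (hN : e (N + 1) = true) :
    W A N e v = 0 := by
  unfold W
  rw [Finset.sum_congr rfl (fun i hi => ?_), Finset.sum_range_sub (fun i => nu (e i)), h0, hN]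
  · simp
  · rw [term_eq, h1 i (Nat.lt_succ_iff.mp (Finset.mem_range.mp hi))]
    ring

lemma W_init (A : Set ℂ) (M : ℕ) (hM : 1 ≤ M) (v : ℕ → ℂ)
    (hvN : chi A (v (2 * M)) = 1) (hvM : chi A (v M) = 0) :
    W A (2 * M) (ext (2 * M) (fun i => decide (i ≤ M))) v = -1 := by
  set N := 2 * M with hNdef
  set e := ext N (fun i => decide (i ≤ M)) with he
  have hsub : ({M, N} : Finset ℕ) ⊆ Finset.range (N + 1) := by
    intro i hi
    simp only [Finset.mem_insert, Finset.mem_singleton] at hi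
    rcases hi with h | h <;> (subst h; exact Finset.mem_range.mpr (by omega))
  have hzero : ∀ i ∈ Finset.range (N + 1), i ∉ ({M, N} : Finset ℕ) →
      (if e i = e (i + 1) then 0 else sgn (e i) * chi A (v i)) = 0 := by
    intro i hi hni
    simp only [Finset.mem_insert, Finset.mem_singleton, not_or] at hni
    have hiN : i ≤ N := Nat.lt_succ_iff.mp (Finset.mem_range.mp hi)
    have : e i = e (i + 1) := by
      simp only [he, ext]
      by_cases hi0 : i = 0
      · subst hi0
        rw [if_neg (by omega), if_pos (by constructor <;> omega)]
        simp [hM]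
      · rw [if_pos ⟨by omega, hiN⟩, if_pos ⟨by omega, by omega⟩]
        exact decide_eq_decide.mpr (by omega)
    simp [this]
  rw [W, ← Finset.sum_subset hsub hzero, Finset.sum_pair (by omega : M ≠ N)]
  have heM : e M = true := by
    simp only [he, ext]
    rw [if_pos ⟨hM, by omega⟩]
    simp
  have heM1 : e (M + 1) = false := by
    simp only [he, ext]
    rw [if_pos ⟨by omega, by omega⟩]
    exact decide_eq_false (by omega)
  have heN : e N = false := by
    simp only [he, ext]
    rw [if_pos ⟨by omega, le_rfl⟩]
    exact decide_eq_false (by omega)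
  have heN1 : e (N + 1) = true := by
    simp only [he, ext]
    rw [if_neg (by omega)]
  rw [heM, heM1, heN, heN1]
  simp [sgn, hvM, hvN]

lemma chi_const {A B : Set ℂ} (hA : IsOpen A) (hB : IsOpen B) (hAB : Disjoint A B)
    {f : ℝ × ℝ → ℂ} (hf : Continuous f) {S : Set (ℝ × ℝ)} (hS : Convex ℝ S)
    (h1 : MapsTo f S (A ∪ B)) {p q : ℝ × ℝ} (hp : p ∈ S) (hq : q ∈ S) :
    chi A (f p) = chi A (f q) := by
  have hpre : IsPreconnected (f '' S) := hS.isPreconnected.image f hf.continuousOn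
  rcases hpre.subset_or_subset hA hB hAB (image_subset_iff.mpr h1) with h | h
  · rw [chi, chi, if_pos (h ⟨p, hp, rfl⟩), if_pos (h ⟨q, hq, rfl⟩)]
  · rw [chi, chi, if_neg (fun hc => hAB.ne_of_mem hc (h ⟨p, hp, rfl⟩) rfl),
      if_neg (fun hc => hAB.ne_of_mem hc (h ⟨q, hq, rfl⟩) rfl)]

noncomputable def gridu (N : ℕ) (i : ℕ) : ℝ := (i : ℝ) / (N : ℝ)

def Ksq (N : ℕ) (i j : ℕ) : Set (ℝ × ℝ) :=
  Icc (gridu N j) (gridu N (j + 1)) ×ˢ Icc (gridu N (i - 1)) (gridu N i)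

open Classical in
noncomputable def lab (f : ℝ × ℝ → ℂ) (D : Set ℂ) (N : ℕ) (j i : ℕ) : Bool :=
  if MapsTo f (Ksq N i j) D then true else false

noncomputable def nodes (f : ℝ × ℝ → ℂ) (N j : ℕ) (i : ℕ) : ℂ := f (gridu N j, gridu N i)

end JanAux

open JanAux

theorem janiszewski_intersection_connected
    (D₁ D₂ : Set ℂ) (h₁o : IsOpen D₁) (h₁c : IsConnected D₁)
    (h₂o : IsOpen D₂) (h₂c : IsConnected D₂)
    (hne : (D₁ ∩ D₂).Nonempty)
    (hsc : SimplyConnectedSpace ↥(D₁ ∪ D₂)) :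
    IsConnected (D₁ ∩ D₂) := by
  classical
  refine ⟨hne, ?_⟩
  by_contra hpc
  rw [IsPreconnected] at hpc
  push_neg at hpc
  obtain ⟨U, V, hU, hV, hUV, hneU, hneV, hempty⟩ := hpc
  set A : Set ℂ := (D₁ ∩ D₂) ∩ U with hAdef
  set B : Set ℂ := (D₁ ∩ D₂) ∩ V with hBdef
  have hAo : IsOpen A := (h₁o.inter h₂o).inter hU
  have hBo : IsOpen B := (h₁o.inter h₂o).inter hV
  have hABdisj : Disjoint A B := by
    rw [Set.disjoint_iff_inter_eq_empty, ← hempty]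
    ext x
    simp only [hAdef, hBdef, Set.mem_inter_iff]
    tauto
  have hABeq : A ∪ B = D₁ ∩ D₂ := by
    ext x
    simp only [hAdef, hBdef, Set.mem_union, Set.mem_inter_iff]
    constructor
    · tauto
    · intro hx
      rcases hUV hx with h | h <;> tauto
  obtain ⟨a, haA⟩ := hneU
  obtain ⟨b, hbB⟩ := hneV
  have ha1 : a ∈ D₁ := haA.1.1
  have ha2 : a ∈ D₂ := haA.1.2
  have hb1 : b ∈ D₁ := hbB.1.1
  have hb2 : b ∈ D₂ := hbB.1.2
  have hbnA : b ∉ A := fun h => hABdisj.ne_of_mem h hbB rfl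
  -- paths
  have hpc1 : IsPathConnected D₁ := h₁o.isConnected_iff_isPathConnected.mp h₁c
  have hpc2 : IsPathConnected D₂ := h₂o.isConnected_iff_isPathConnected.mp h₂c
  obtain ⟨α, hα⟩ : ∃ p : Path a b, ∀ t, p t ∈ D₁ := by
    have h := hpc1.joinedIn a ha1 b hb1
    exact ⟨h.somePath, h.somePath_mem⟩
  obtain ⟨β, hβ⟩ : ∃ p : Path b a, ∀ t, p t ∈ D₂ := by
    have h := hpc2.joinedIn b hb2 a ha2
    exact ⟨h.somePath, h.somePath_mem⟩
  set lam : Path a a := α.trans β with hlamdef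
  have hlam1 : ∀ t : unitInterval, (t : ℝ) ≤ 1 / 2 → lam t ∈ D₁ := by
    intro t ht
    rw [hlamdef, Path.trans_apply, dif_pos ht]
    exact hα _
  have hlamhalf : ∀ t : unitInterval, (t : ℝ) = 1 / 2 → lam t = b := by
    intro t ht
    rw [hlamdef, Path.trans_apply, dif_pos (le_of_eq ht)]
    have h1 : ∀ (x : unitInterval), x = 1 → α x = b := fun x hx => hx ▸ α.target
    exact h1 _ (Subtype.ext (by simp [ht]))
  have hlam2 : ∀ t : unitInterval, 1 / 2 ≤ (t : ℝ) → lam t ∈ D₂ := by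
    intro t ht
    rcases eq_or_lt_of_le ht with heq | hlt
    · rw [hlamhalf t heq.symm]
      exact hb2
    · rw [hlamdef, Path.trans_apply, dif_neg (not_le.mpr hlt)]
      exact hβ _
  have hlammem : ∀ t, lam t ∈ D₁ ∪ D₂ := by
    intro t
    rcases le_total (t : ℝ) (1 / 2) with h | h
    · exact Or.inl (hlam1 t h)
    · exact Or.inr (hlam2 t h)
  have haX : a ∈ D₁ ∪ D₂ := Or.inl ha1
  set xa : ↥(D₁ ∪ D₂) := ⟨a, haX⟩ with hxadef
  set Lam : Path xa xa :=
    { toFun := fun t => ⟨lam t, hlammem t⟩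
      continuous_toFun := lam.continuous.subtype_mk _
      source' := Subtype.ext lam.source
      target' := Subtype.ext lam.target } with hLamdef
  obtain ⟨H⟩ := SimplyConnectedSpace.paths_homotopic Lam (Path.refl xa)
  set f : ℝ × ℝ → ℂ := fun p =>
    ((H (projIcc 0 1 zero_le_one p.1, projIcc 0 1 zero_le_one p.2) : ↥(D₁ ∪ D₂)) : ℂ) with hfdef
  have hfc : Continuous f := by
    apply continuous_subtype_val.comp
    exact H.continuous.comp
      ((continuous_projIcc.comp continuous_fst).prodMk (continuous_projIcc.comp continuous_snd))
  have hfmem : ∀ p, f p ∈ D₁ ∪ D₂ := fun p => (H _).2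
  have hproj0 : projIcc (0 : ℝ) 1 zero_le_one 0 = 0 :=
    Subtype.ext (by rw [Set.coe_projIcc]; norm_num)
  have hproj1 : projIcc (0 : ℝ) 1 zero_le_one 1 = 1 :=
    Subtype.ext (by rw [Set.coe_projIcc]; norm_num)
  have hLamapp : ∀ t, Lam.toContinuousMap t = ⟨lam t, hlammem t⟩ := fun t => rfl
  have hf_left : ∀ s : ℝ, f (s, 0) = a := by
    intro s
    show ((H (projIcc 0 1 zero_le_one s, projIcc 0 1 zero_le_one 0) : ↥(D₁ ∪ D₂)) : ℂ) = a
    rw [hproj0, H.eq_fst _ (Or.inl rfl), hLamapp]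
    exact lam.source
  have hf_right : ∀ s : ℝ, f (s, 1) = a := by
    intro s
    show ((H (projIcc 0 1 zero_le_one s, projIcc 0 1 zero_le_one 1) : ↥(D₁ ∪ D₂)) : ℂ) = a
    rw [hproj1, H.eq_snd _ (Or.inr rfl)]
    rfl
  have hf_one : ∀ t : ℝ, f (1, t) = a := by
    intro t
    show ((H (projIcc 0 1 zero_le_one 1, projIcc 0 1 zero_le_one t) : ↥(D₁ ∪ D₂)) : ℂ) = a
    rw [hproj1, H.apply_one]
    rfl
  have hf_zero : ∀ t : ℝ, f (0, t) = lam (projIcc 0 1 zero_le_one t) := by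
    intro t
    show ((H (projIcc 0 1 zero_le_one 0, projIcc 0 1 zero_le_one t) : ↥(D₁ ∪ D₂)) : ℂ) = _
    rw [hproj0, H.apply_zero, hLamapp]
  -- Lebesgue number
  have hQc : IsCompact (Icc (0 : ℝ) 1 ×ˢ Icc (0 : ℝ) 1) := isCompact_Icc.prod isCompact_Icc
  have hcovo : ∀ bb : Bool, IsOpen (f ⁻¹' (if bb then D₁ else D₂)) := by
    intro bb
    cases bb
    · exact h₂o.preimage hfc
    · exact h₁o.preimage hfc
  have hQsub : Icc (0 : ℝ) 1 ×ˢ Icc (0 : ℝ) 1 ⊆ ⋃ bb : Bool, f ⁻¹' (if bb then D₁ else D₂) := by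
    intro p _
    rcases hfmem p with h | h
    · exact mem_iUnion.mpr ⟨true, by simpa using h⟩
    · exact mem_iUnion.mpr ⟨false, by simpa using h⟩
  obtain ⟨δ, hδ0, hδ⟩ := lebesgue_number_lemma_of_metric hQc hcovo hQsub
  obtain ⟨M₀, hM₀⟩ := exists_nat_gt (1 / δ)
  set M : ℕ := M₀ + 1 with hMdef
  set N : ℕ := 2 * M with hNdef
  have hM1 : 1 ≤ M := by omega
  have hN2 : 2 ≤ N := by omega
  have hNR : (0 : ℝ) < (N : ℝ) := by exact_mod_cast Nat.pos_of_ne_zero (by omega)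
  have hNδ : 1 / (N : ℝ) < δ := by
    have hMN : (1 : ℝ) / δ < (N : ℝ) :=
      lt_of_lt_of_le hM₀ (by exact_mod_cast (by omega : M₀ ≤ N))
    rw [div_lt_iff₀ hNR]
    rw [div_lt_iff₀ hδ0] at hMN
    linarith
  have humem : ∀ i : ℕ, i ≤ N → gridu N i ∈ Icc (0 : ℝ) 1 := by
    intro i hi
    constructor
    · simp only [gridu]
      positivity
    · simp only [gridu]
      rw [div_le_one hNR]
      exact_mod_cast hi
  have humono : ∀ i j : ℕ, i ≤ j → gridu N i ≤ gridu N j := by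
    intro i j h
    simp only [gridu]
    exact (div_le_div_iff_of_pos_right hNR).mpr (Nat.cast_le.mpr h)
  have hustep : ∀ i : ℕ, gridu N (i + 1) - gridu N i = 1 / (N : ℝ) := by
    intro i
    simp only [gridu]
    push_cast
    ring
  have hudist : ∀ i : ℕ, ∀ x ∈ Icc (gridu N i) (gridu N (i + 1)), dist x (gridu N i) < δ := by
    intro i x hx
    rw [Real.dist_eq, _root_.abs_of_nonneg (sub_nonneg.mpr hx.1)]
    have h2 := hustep i
    have h3 := hx.2
    linarith [hNδ]
  have hconvS : ∀ x1 x2 y1 y2 : ℝ, Convex ℝ ((Icc x1 x2 ×ˢ Icc y1 y2 : Set (ℝ × ℝ))) :=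
    fun _ _ _ _ => (convex_Icc _ _).prod (convex_Icc _ _)
  have hKcov : ∀ i j : ℕ, 1 ≤ i → i ≤ N → j + 1 ≤ N →
      MapsTo f (Ksq N i j) D₁ ∨ MapsTo f (Ksq N i j) D₂ := by
    intro i j h1 h2 h3
    have hcorner : ((gridu N j, gridu N (i - 1)) : ℝ × ℝ) ∈ Icc (0 : ℝ) 1 ×ˢ Icc (0 : ℝ) 1 :=
      ⟨humem j (by omega), humem (i - 1) (by omega)⟩
    obtain ⟨bb, hbb⟩ := hδ _ hcorner
    have hKball : Ksq N i j ⊆ ball ((gridu N j, gridu N (i - 1)) : ℝ × ℝ) δ := by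
      intro p hp
      rw [mem_ball, Prod.dist_eq]
      apply max_lt
      · exact hudist j p.1 hp.1
      · refine hudist (i - 1) p.2 ?_
        rw [show i - 1 + 1 = i from by omega]
        exact hp.2
    cases bb with
    | true => exact Or.inl fun p hp => by simpa using hbb (hKball hp)
    | false => exact Or.inr fun p hp => by simpa using hbb (hKball hp)
  have hL1 : ∀ j i : ℕ, lab f D₁ N j i = true → MapsTo f (Ksq N i j) D₁ := by
    intro j i h
    by_cases hm : MapsTo f (Ksq N i j) D₁
    · exact hm
    · simp [lab, hm] at h
  have hL2 : ∀ j i : ℕ, 1 ≤ i → i ≤ N → j + 1 ≤ N → lab f D₁ N j i = false →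
      MapsTo f (Ksq N i j) D₂ := by
    intro j i h1 h2 h3 h
    by_cases hm : MapsTo f (Ksq N i j) D₁
    · simp [lab, hm] at h
    · exact (hKcov i j h1 h2 h3).resolve_left hm
  have hu0 : gridu N 0 = 0 := by simp [gridu]
  have huNval : gridu N N = 1 := by
    simp only [gridu]
    field_simp
  have hv_left : ∀ j : ℕ, nodes f N j 0 = a := by
    intro j
    rw [nodes, hu0]
    exact hf_left _
  have hv_rightN : ∀ j : ℕ, nodes f N j N = a := by
    intro j
    rw [nodes, huNval]
    exact hf_right _
  have hv_top : ∀ i : ℕ, nodes f N N i = a := by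
    intro i
    rw [nodes, huNval]
    exact hf_one _
  have hchia : chi A a = 1 := by
    simp only [chi]
    rw [if_pos haA]
  have hboth : ∀ S : Set (ℝ × ℝ), Convex ℝ S → MapsTo f S D₁ → MapsTo f S D₂ →
      ∀ p ∈ S, ∀ q ∈ S, chi A (f p) = chi A (f q) := by
    intro S hS hm1 hm2 p hp q hq
    refine chi_const hAo hBo hABdisj hfc hS (fun x hx => ?_) hp hq
    rw [hABeq]
    exact ⟨hm1 hx, hm2 hx⟩
  have hMR : (0 : ℝ) < (M : ℝ) := by exact_mod_cast hM1
  have huM : gridu N M = 1 / 2 := by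
    simp only [gridu]
    rw [div_eq_iff (ne_of_gt hNR), hNdef]
    push_cast
    ring
  have hnat : ∀ k : ℕ, 1 ≤ k → k ≤ N →
      MapsTo f (Icc (gridu N 0) (gridu N 0) ×ˢ Icc (gridu N (k - 1)) (gridu N k))
        (if k ≤ M then D₁ else D₂) := by
    intro k h1 h2 p hp
    obtain ⟨p1, p2⟩ := p
    have hp1 : p1 = 0 := by
      have h := hp.1
      rw [hu0] at h
      exact le_antisymm h.2 h.1
    have hpt : p2 ∈ Icc (0 : ℝ) 1 := by
      constructor
      · exact le_trans (humem (k - 1) (by omega)).1 hp.2.1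
      · exact le_trans hp.2.2 (humem k h2).2
    have hfp : f (p1, p2) = lam ⟨p2, hpt⟩ := by
      rw [hp1, hf_zero, projIcc_of_mem _ hpt]
    by_cases hk : k ≤ M
    · rw [if_pos hk, hfp]
      apply hlam1
      show p2 ≤ 1 / 2
      calc p2 ≤ gridu N k := hp.2.2
        _ ≤ gridu N M := humono k M hk
        _ = 1 / 2 := huM
    · rw [if_neg hk, hfp]
      apply hlam2
      show 1 / 2 ≤ p2
      calc (1 / 2 : ℝ) = gridu N M := huM.symm
        _ ≤ gridu N (k - 1) := humono M (k - 1) (by omega)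
        _ ≤ p2 := hp.2.1
  have hv0M : nodes f N 0 M = b := by
    rw [nodes, hu0, hf_zero, projIcc_of_mem _ (humem M (by omega))]
    exact hlamhalf _ huM
  -- base row
  have base : W A N (ext N (lab f D₁ N 0)) (nodes f N 0) = -1 := by
    have hinit : W A N (ext N (fun i => decide (i ≤ M))) (nodes f N 0) = -1 := by
      have h1 : chi A (nodes f N 0 (2 * M)) = 1 := by
        rw [← hNdef, hv_rightN 0, hchia]
      have h2 : chi A (nodes f N 0 M) = 0 := by
        rw [hv0M]
        simp only [chi]
        rw [if_neg hbnA]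
      have hW := W_init A M hM1 (nodes f N 0) h1 h2
      rw [← hNdef] at hW
      exact hW
    have hx : W A N (ext N (fun i => decide (i ≤ M))) (nodes f N 0)
        = W A N (ext N (lab f D₁ N 0)) (nodes f N 0) := by
      apply W_exchange
      intro k hk1 hkN hne'
      have hSsub : (Icc (gridu N 0) (gridu N 0) ×ˢ Icc (gridu N (k - 1)) (gridu N k) : Set (ℝ × ℝ))
          ⊆ Ksq N k 0 := by
        rw [Ksq]
        exact Set.prod_mono (Icc_subset_Icc le_rfl (humono 0 1 (by omega))) subset_rfl
      have hnatk := hnat k hk1 hkN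
      have hm : MapsTo f (Icc (gridu N 0) (gridu N 0) ×ˢ Icc (gridu N (k - 1)) (gridu N k)) D₁
          ∧ MapsTo f (Icc (gridu N 0) (gridu N 0) ×ˢ Icc (gridu N (k - 1)) (gridu N k)) D₂ := by
        by_cases hk : k ≤ M
        · rw [if_pos hk] at hnatk
          have hlabk : lab f D₁ N 0 k = false := by
            cases hlab : lab f D₁ N 0 k
            · rfl
            · exact absurd (by rw [hlab, decide_eq_true hk]) hne'
          exact ⟨hnatk, fun x hx' => hL2 0 k hk1 hkN (by omega) hlabk (hSsub hx')⟩
        · rw [if_neg hk] at hnatk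
          have hlabk : lab f D₁ N 0 k = true := by
            cases hlab : lab f D₁ N 0 k
            · exact absurd (by rw [hlab, decide_eq_false hk]) hne'
            · rfl
          exact ⟨fun x hx' => hL1 0 k hlabk (hSsub hx'), hnatk⟩
      exact hboth _ (hconvS _ _ _ _) hm.1 hm.2
        ((gridu N 0, gridu N (k - 1)))
        ⟨left_mem_Icc.mpr le_rfl, ⟨le_rfl, humono (k - 1) k (by omega)⟩⟩
        ((gridu N 0, gridu N k))
        ⟨left_mem_Icc.mpr le_rfl, ⟨humono (k - 1) k (by omega), le_rfl⟩⟩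
    rw [← hx]
    exact hinit
  -- row shift
  have hshift : ∀ j : ℕ, j + 1 ≤ N →
      W A N (ext N (lab f D₁ N j)) (nodes f N j)
        = W A N (ext N (lab f D₁ N j)) (nodes f N (j + 1)) := by
    intro j hj
    apply W_congr
    intro i hiN hne'
    rcases Nat.eq_zero_or_pos i with hi0 | hi1
    · subst hi0
      rw [hv_left j, hv_left (j + 1)]
    · rcases eq_or_lt_of_le hiN with hiN' | hiNlt
      · subst hiN'
        rw [hv_rightN j, hv_rightN (j + 1)]
      · have he1 : ext N (lab f D₁ N j) i = lab f D₁ N j i := by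
          simp only [JanAux.ext]
          rw [if_pos ⟨hi1, by omega⟩]
        have he2 : ext N (lab f D₁ N j) (i + 1) = lab f D₁ N j (i + 1) := by
          simp only [JanAux.ext]
          rw [if_pos ⟨by omega, by omega⟩]
        rw [he1, he2] at hne'
        have hsub1 : (Icc (gridu N j) (gridu N (j + 1)) ×ˢ Icc (gridu N i) (gridu N i) : Set (ℝ × ℝ))
            ⊆ Ksq N i j := by
          rw [Ksq]
          exact Set.prod_mono subset_rfl (Icc_subset_Icc (humono (i - 1) i (by omega)) le_rfl)
        have hsub2 : (Icc (gridu N j) (gridu N (j + 1)) ×ˢ Icc (gridu N i) (gridu N i) : Set (ℝ × ℝ))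
            ⊆ Ksq N (i + 1) j := by
          rw [Ksq]
          exact Set.prod_mono subset_rfl (Icc_subset_Icc le_rfl (humono i (i + 1) (by omega)))
        have hm : MapsTo f (Icc (gridu N j) (gridu N (j + 1)) ×ˢ Icc (gridu N i) (gridu N i)) D₁
            ∧ MapsTo f (Icc (gridu N j) (gridu N (j + 1)) ×ˢ Icc (gridu N i) (gridu N i)) D₂ := by
          cases hlab : lab f D₁ N j i
          · have hlab2 : lab f D₁ N j (i + 1) = true := by
              cases h2 : lab f D₁ N j (i + 1)
              · exact absurd (by rw [hlab, h2]) hne'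
              · rfl
            exact ⟨fun x hx' => hL1 j (i + 1) hlab2 (hsub2 hx'),
              fun x hx' => hL2 j i hi1 (by omega) hj hlab (hsub1 hx')⟩
          · have hlab2 : lab f D₁ N j (i + 1) = false := by
              cases h2 : lab f D₁ N j (i + 1)
              · rfl
              · exact absurd (by rw [hlab, h2]) hne'
            exact ⟨fun x hx' => hL1 j i hlab (hsub1 hx'),
              fun x hx' => hL2 j (i + 1) (by omega) (by omega) hj hlab2 (hsub2 hx')⟩
        exact hboth _ (hconvS _ _ _ _) hm.1 hm.2
          ((gridu N j, gridu N i))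
          ⟨⟨le_rfl, humono j (j + 1) (by omega)⟩, ⟨le_rfl, le_rfl⟩⟩
          ((gridu N (j + 1), gridu N i))
          ⟨⟨humono j (j + 1) (by omega), le_rfl⟩, ⟨le_rfl, le_rfl⟩⟩
  -- label update
  have hupd : ∀ j : ℕ, j + 2 ≤ N →
      W A N (ext N (lab f D₁ N j)) (nodes f N (j + 1))
        = W A N (ext N (lab f D₁ N (j + 1))) (nodes f N (j + 1)) := by
    intro j hj
    apply W_exchange
    intro k hk1 hkN hne'
    have hsub1 : (Icc (gridu N (j + 1)) (gridu N (j + 1)) ×ˢ Icc (gridu N (k - 1)) (gridu N k) : Set (ℝ × ℝ))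
        ⊆ Ksq N k j := by
      rw [Ksq]
      exact Set.prod_mono (Icc_subset_Icc (humono j (j + 1) (by omega)) le_rfl) subset_rfl
    have hsub2 : (Icc (gridu N (j + 1)) (gridu N (j + 1)) ×ˢ Icc (gridu N (k - 1)) (gridu N k) : Set (ℝ × ℝ))
        ⊆ Ksq N k (j + 1) := by
      rw [Ksq]
      exact Set.prod_mono (Icc_subset_Icc le_rfl (humono (j + 1) (j + 2) (by omega))) subset_rfl
    have hm : MapsTo f (Icc (gridu N (j + 1)) (gridu N (j + 1)) ×ˢ Icc (gridu N (k - 1)) (gridu N k)) D₁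
        ∧ MapsTo f (Icc (gridu N (j + 1)) (gridu N (j + 1)) ×ˢ Icc (gridu N (k - 1)) (gridu N k)) D₂ := by
      cases hlab : lab f D₁ N j k
      · have hlab2 : lab f D₁ N (j + 1) k = true := by
          cases h2 : lab f D₁ N (j + 1) k
          · exact absurd (by rw [hlab, h2]) hne'
          · rfl
        exact ⟨fun x hx' => hL1 (j + 1) k hlab2 (hsub2 hx'),
          fun x hx' => hL2 j k hk1 hkN (by omega) hlab (hsub1 hx')⟩
      · have hlab2 : lab f D₁ N (j + 1) k = false := by
          cases h2 : lab f D₁ N (j + 1) k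
          · rfl
          · exact absurd (by rw [hlab, h2]) hne'
        exact ⟨fun x hx' => hL1 j k hlab (hsub1 hx'),
          fun x hx' => hL2 (j + 1) k hk1 hkN (by omega) hlab2 (hsub2 hx')⟩
    exact hboth _ (hconvS _ _ _ _) hm.1 hm.2
      ((gridu N (j + 1), gridu N (k - 1)))
      ⟨left_mem_Icc.mpr le_rfl, ⟨le_rfl, humono (k - 1) k (by omega)⟩⟩
      ((gridu N (j + 1), gridu N k))
      ⟨left_mem_Icc.mpr le_rfl, ⟨humono (k - 1) k (by omega), le_rfl⟩⟩
  -- the chain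
  have hPj : ∀ j : ℕ, j + 1 ≤ N → W A N (ext N (lab f D₁ N j)) (nodes f N j) = -1 := by
    intro j
    induction j with
    | zero => intro _; exact base
    | succ j ih =>
      intro hj
      have e1 := ih (by omega)
      rw [hshift j (by omega), hupd j (by omega)] at e1
      exact e1
  have hfin1 := hPj (N - 1) (by omega)
  rw [hshift (N - 1) (by omega)] at hfin1
  rw [show N - 1 + 1 = N from by omega] at hfin1
  have hzero : W A N (ext N (lab f D₁ N (N - 1))) (nodes f N N) = 0 := by
    apply W_zero
    · intro i _
      rw [hv_top i, hchia]
    · simp only [JanAux.ext]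
      rw [if_neg (by omega)]
    · simp only [JanAux.ext]
      rw [if_neg (by omega)]
  rw [hzero] at hfin1
  exact absurd hfin1 (by norm_num)
end

section
/- Let D₁ and D₂ be domains in ℂ with nonempty intersection such that D₁ ∪ D₂ is simply connected. Then the sets P_y(D₁), P_y(D₂) and P_y(D₁ ∩ D₂) are each nonempty open intervals in ℝ (i.e., open connected subsets of ℝ). -/
open Complex Set Metric

/-
Only the connectedness of the projection of D₁ ∩ D₂ needs an argument. Suppose `a < c < b` with
`a, b` heights of points `p, q ∈ D₁ ∩ D₂` but no point of D₁ ∩ D₂ at height `c`. The line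
`im = c` then splits into relatively open parts in D₁ and in D₂, and Urysohn gives a nonvanishing
`G` on D₁ ∪ D₂ with `im G = im z - c` that avoids `(-∞, 0]` on D₁ and `[0, ∞)` on D₂. Comparing
the principal logarithms of `G` on D₁ and of `-G` on D₂ with a global logarithm of `G` (which
exists since D₁ ∪ D₂ is simply connected) shows that `arg G - arg (-G)` agrees at `p` and `q`;
but it is `-π` below the line and `π` above it.
-/
open Topology Real

lemma Py_eq_image_im (D : Set ℂ) : Py D = im '' D := rfl

lemma IsPreconnected.sub_eq_sub_of_exp_eq {X : Type*} [TopologicalSpace X] {S : Set X}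
    (hS : IsPreconnected S) {f g : X → ℂ} (hf : ContinuousOn f S) (hg : ContinuousOn g S)
    (hfg : ∀ x ∈ S, exp (f x) = exp (g x)) {x y : X} (hx : x ∈ S) (hy : y ∈ S) :
    f x - g x = f y - g y := by
  have hT : IsDiscrete (AddSubgroup.zmultiples (2 * π * I) : Set ℂ) :=
    isDiscrete_iff_discreteTopology.mpr (NormedSpace.discreteTopology_zmultiples _)
  refine hS.constant_of_mapsTo hT (hf.sub hg) (fun z hz ↦ ?_) hx hy
  obtain ⟨n, hn⟩ := exp_eq_exp_iff_exists_int.mp (hfg z hz)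
  exact ⟨n, by simp [hn]⟩

lemma exists_continuous_exp_eq {X : Type*} [TopologicalSpace X] [SimplyConnectedSpace X]
    [LocallyPathConnectedSpace X] (f : C(X, ℂ)) (hf : ∀ x, f x ≠ 0) :
    ∃ L : C(X, ℂ), ∀ x, exp (L x) = f x := by
  obtain ⟨x₀⟩ := (inferInstance : Nonempty X)
  obtain ⟨L, ⟨-, hL⟩, -⟩ := isCoveringMapOn_exp.existsUnique_continuousMap_lifts f
    (exp_log (hf x₀)) hf
  exact ⟨L, congrFun hL⟩

lemma exists_continuous_eqOn_zero_eqOn_one_of_isOpen {X : Type*} [TopologicalSpace X]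
    [NormalSpace X] {U V K : Set X} (hU : IsOpen U) (hV : IsOpen V) (hK : IsClosed K)
    (hKUV : K ⊆ U ∪ V) (hdisj : Disjoint K (U ∩ V)) :
    ∃ u : C(X, ℝ), EqOn u 0 (K ∩ U) ∧ EqOn u 1 (K ∩ V) := by
  obtain ⟨u, hu₀, hu₁, -⟩ := exists_continuous_zero_one_of_isClosed
    (hK.inter hV.isClosed_compl) (hK.inter hU.isClosed_compl)
    (disjoint_left.mpr fun x ⟨hxK, hxV⟩ ⟨_, hxU⟩ ↦ (hKUV hxK).elim hxU hxV)
  exact ⟨u, fun x ⟨hxK, hxU⟩ ↦ hu₀ ⟨hxK, fun hxV ↦ hdisj.notMem_of_mem_left hxK ⟨hxU, hxV⟩⟩,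
    fun x ⟨hxK, hxV⟩ ↦ hu₁ ⟨hxK, fun hxU ↦ hdisj.notMem_of_mem_left hxK ⟨hxU, hxV⟩⟩⟩

theorem log_sub_log_neg_eq_of_simplyConnectedSpace {X : Type*} [TopologicalSpace X]
    [SimplyConnectedSpace X] [LocallyPathConnectedSpace X] {G : C(X, ℂ)} (hG : ∀ x, G x ≠ 0)
    {S T : Set X} (hS : IsPreconnected S) (hT : IsPreconnected T)
    (hGS : ∀ x ∈ S, G x ∈ slitPlane) (hGT : ∀ x ∈ T, -G x ∈ slitPlane)
    {p q : X} (hp : p ∈ S ∩ T) (hq : q ∈ S ∩ T) :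
    log (G q) - log (-G q) = log (G p) - log (-G p) := by
  obtain ⟨L, hL⟩ := exists_continuous_exp_eq G hG
  have hS_const := hS.sub_eq_sub_of_exp_eq (f := L) (g := fun x ↦ log (G x))
    L.continuous.continuousOn (G.continuous.continuousOn.clog hGS)
    (fun x _ ↦ by rw [hL, exp_log (hG x)]) hq.1 hp.1
  have hT_const := hT.sub_eq_sub_of_exp_eq (f := fun x ↦ L x + π * I)
    (g := fun x ↦ log (-G x)) (by fun_prop) (G.continuous.neg.continuousOn.clog hGT)
    (fun x _ ↦ by rw [Complex.exp_add, hL, exp_pi_mul_I, exp_log (neg_ne_zero.mpr (hG x))]; ring)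
    hq.2 hp.2
  linear_combination hT_const - hS_const

theorem isPreconnected_image_im_inter {D₁ D₂ : Set ℂ} (h₁o : IsOpen D₁) (h₁c : IsPreconnected D₁)
    (h₂o : IsOpen D₂) (h₂c : IsPreconnected D₂) [SimplyConnectedSpace ↥(D₁ ∪ D₂)] :
    IsPreconnected (im '' (D₁ ∩ D₂)) := by
  have := (h₁o.union h₂o).locallyPathConnectedSpace
  refine isPreconnected_iff_ordConnected.mpr (ordConnected_of_Ioo ?_)
  rintro _ ⟨p, hp, rfl⟩ _ ⟨q, hq, rfl⟩ - c ⟨hpc, hcq⟩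
  by_contra hc
  let U : Set ↥(D₁ ∪ D₂) := (↑) ⁻¹' D₁
  let V : Set ↥(D₁ ∪ D₂) := (↑) ⁻¹' D₂
  have hU : IsPreconnected U := IsInducing.subtypeVal.isPreconnected_image.mp <| by
    rwa [Subtype.image_preimage_coe, union_inter_cancel_left]
  have hV : IsPreconnected V := IsInducing.subtypeVal.isPreconnected_image.mp <| by
    rwa [Subtype.image_preimage_coe, union_inter_cancel_right]
  obtain ⟨u, hu₀, hu₁⟩ := exists_continuous_eqOn_zero_eqOn_one_of_isOpen (U := U) (V := V)
    (h₁o.preimage continuous_subtype_val) (h₂o.preimage continuous_subtype_val)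
    ((isClosed_eq continuous_im continuous_const).preimage continuous_subtype_val)
    (fun x _ ↦ x.2) (disjoint_left.mpr fun x hxc hxUV ↦ hc ⟨x.1, hxUV, hxc⟩)
  -- On the line `im = c`, `G` is `1` on `D₁` and `-1` on `D₂`; off it, `G` is off the real axis.
  let G : C(↥(D₁ ∪ D₂), ℂ) :=
    ⟨fun x ↦ (1 - 2 * u x : ℝ) + ((x : ℂ).im - c : ℝ) * I, by fun_prop⟩
  have hG_re (x) : (G x).re = 1 - 2 * u x := by simp [G]
  have hG_im (x) : (G x).im = (x : ℂ).im - c := by simp [G]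
  have hGU : ∀ x ∈ U, G x ∈ slitPlane := fun x hx ↦ by
    rw [mem_slitPlane_iff, hG_re, hG_im]
    by_cases hxc : (x : ℂ).im = c
    · left; rw [hu₀ ⟨hxc, hx⟩]; norm_num
    · exact .inr (sub_ne_zero.mpr hxc)
  have hGV : ∀ x ∈ V, -G x ∈ slitPlane := fun x hx ↦ by
    rw [mem_slitPlane_iff, neg_re, neg_im, hG_re, hG_im]
    by_cases hxc : (x : ℂ).im = c
    · left; rw [hu₁ ⟨hxc, hx⟩]; norm_num
    · exact .inr (neg_ne_zero.mpr (sub_ne_zero.mpr hxc))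
  have hG (x) : G x ≠ 0 := x.2.elim (fun hx ↦ slitPlane_ne_zero (hGU x hx))
    (fun hx ↦ neg_ne_zero.mp (slitPlane_ne_zero (hGV x hx)))
  have key := congrArg im (log_sub_log_neg_eq_of_simplyConnectedSpace hG hU hV hGU hGV
    (p := ⟨p, .inl hp.1⟩) (q := ⟨q, .inl hq.1⟩) hp hq)
  simp only [sub_im, log_im] at key
  rw [arg_neg_eq_arg_sub_pi_of_im_pos (by rw [hG_im]; linarith),
    arg_neg_eq_arg_add_pi_of_im_neg (by rw [hG_im]; linarith)] at key
  linarith [pi_pos]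

theorem projections_are_open_intervals
    (D₁ D₂ : Set ℂ) (h₁o : IsOpen D₁) (h₁c : IsConnected D₁)
    (h₂o : IsOpen D₂) (h₂c : IsConnected D₂)
    (hne : (D₁ ∩ D₂).Nonempty)
    (hsc : SimplyConnectedSpace ↥(D₁ ∪ D₂)) :
    ((Py D₁).Nonempty ∧ IsOpen (Py D₁) ∧ IsPreconnected (Py D₁)) ∧
    ((Py D₂).Nonempty ∧ IsOpen (Py D₂) ∧ IsPreconnected (Py D₂)) ∧
    ((Py (D₁ ∩ D₂)).Nonempty ∧ IsOpen (Py (D₁ ∩ D₂)) ∧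
      IsPreconnected (Py (D₁ ∩ D₂))) := by
  simp only [Py_eq_image_im]
  exact ⟨⟨h₁c.nonempty.image im, isOpenMap_im D₁ h₁o,
      h₁c.isPreconnected.image im continuous_im.continuousOn⟩,
    ⟨h₂c.nonempty.image im, isOpenMap_im D₂ h₂o,
      h₂c.isPreconnected.image im continuous_im.continuousOn⟩,
    hne.image im, isOpenMap_im _ (h₁o.inter h₂o),
    isPreconnected_image_im_inter h₁o h₁c.isPreconnected h₂o h₂c.isPreconnected⟩
end

section
/- Let D₁, D₂ ⊆ ℂ be domains convex in the direction of the real axis, and let q : D₁ ∪ D₂ → ℂ be a continuous, locally injective map satisfying Im q(z) = Im z for all z ∈ D₁ ∪ D₂. If q is injective on D₁ ∪ D₂, then P_y(D₁ ∩ D₂) = P_y(q(D₁) ∩ q(D₂)). -/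
open Complex Set Metric

theorem injective_implies_projection_eq
    (D₁ D₂ : Set ℂ) (h₁o : IsOpen D₁) (h₁c : IsConnected D₁) (h₁x : CvxRe D₁)
    (h₂o : IsOpen D₂) (h₂c : IsConnected D₂) (h₂x : CvxRe D₂)
    (q : ℂ → ℂ) (hq : ContinuousOn q (D₁ ∪ D₂))
    (hloc : LocInjOn q (D₁ ∪ D₂))
    (him : ∀ z ∈ D₁ ∪ D₂, (q z).im = z.im)
    (hinj : Set.InjOn q (D₁ ∪ D₂)) :
    Py (D₁ ∩ D₂) = Py (q '' D₁ ∩ q '' D₂) := by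
  ext a
  simp only [Py, mem_setOf_eq]
  constructor
  · rintro ⟨z, ⟨hz1, hz2⟩, hza⟩
    exact ⟨q z, ⟨⟨z, hz1, rfl⟩, ⟨z, hz2, rfl⟩⟩, by rw [him z (Or.inl hz1), hza]⟩
  · rintro ⟨w, ⟨⟨z₁, hz₁, rfl⟩, ⟨z₂, hz₂, hq2⟩⟩, hwa⟩
    have : z₂ = z₁ := hinj (Or.inr hz₂) (Or.inl hz₁) hq2
    subst this
    exact ⟨z₂, ⟨hz₁, hz₂⟩, by rw [← him z₂ (Or.inl hz₁), hwa]⟩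
end

section
/- Let D₁, D₂ ⊆ ℂ be domains convex in the direction of the real axis, and let q : D₁ ∪ D₂ → ℂ be a continuous, locally injective map satisfying Im q(z) = Im z for all z ∈ D₁ ∪ D₂. If P_y(D₁ ∩ D₂) = P_y(q(D₁) ∩ q(D₂)), then q is injective on D₁ ∪ D₂. -/
open Complex Set Metric

/-- An interior strict-max point contradicts local injectivity. -/
lemma aux_max {f : ℝ → ℝ} {a b c : ℝ} (hab : a < b) (hc : c ∈ Set.Ioo a b)
    (hcont : ContinuousOn f (Set.Icc a b))
    (hmax : ∀ x ∈ Set.Icc a b, f x ≤ f c)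
    (hloc : ∀ x ∈ Set.Icc a b, ∃ U ∈ nhdsWithin x (Set.Icc a b), Set.InjOn f U) :
    False := by
  obtain ⟨hca, hcb⟩ := hc
  obtain ⟨U, hU, hinj⟩ := hloc c ⟨hca.le, hcb.le⟩
  rw [mem_nhdsWithin] at hU
  obtain ⟨V, hVo, hcV, hVU⟩ := hU
  obtain ⟨δ, hδ, hball⟩ := Metric.isOpen_iff.1 hVo c hcV
  set ε := min δ (min (c - a) (b - c)) / 2 with hεdef
  have hmin : 0 < min δ (min (c - a) (b - c)) :=
    lt_min hδ (lt_min (by linarith) (by linarith))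
  have hε0 : 0 < ε := by positivity
  have hεδ : ε < δ := by
    have h1 : min δ (min (c - a) (b - c)) ≤ δ := min_le_left _ _
    simp only [hεdef]; linarith
  have hεa : ε < c - a := by
    have h1 : min δ (min (c - a) (b - c)) ≤ c - a :=
      le_trans (min_le_right _ _) (min_le_left _ _)
    simp only [hεdef]; linarith
  have hεb : ε < b - c := by
    have h1 : min δ (min (c - a) (b - c)) ≤ b - c :=
      le_trans (min_le_right _ _) (min_le_right _ _)
    simp only [hεdef]; linarith
  have hsub : Set.Icc (c - ε) (c + ε) ⊆ U := by
    intro x hx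
    apply hVU
    refine ⟨hball ?_, by constructor <;> [linarith [hx.1]; linarith [hx.2]]⟩
    rw [Metric.mem_ball, Real.dist_eq, abs_lt]
    constructor <;> [linarith [hx.1]; linarith [hx.2]]
  have hcU : c ∈ U := hsub ⟨by linarith, by linarith⟩
  have huU : (c - ε) ∈ U := hsub ⟨le_rfl, by linarith⟩
  have hvU : (c + ε) ∈ U := hsub ⟨by linarith, le_rfl⟩
  have huI : (c - ε) ∈ Set.Icc a b := ⟨by linarith, by linarith⟩
  have hvI : (c + ε) ∈ Set.Icc a b := ⟨by linarith, by linarith⟩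
  have hu : f (c - ε) < f c := by
    rcases lt_or_eq_of_le (hmax _ huI) with h | h
    · exact h
    · have := hinj huU hcU h
      linarith [this]
  have hv : f (c + ε) < f c := by
    rcases lt_or_eq_of_le (hmax _ hvI) with h | h
    · exact h
    · have := hinj hvU hcU h
      linarith [this]
  set y := max (f (c - ε)) (f (c + ε)) with hy
  have hyc : y < f c := max_lt hu hv
  have hs : ∃ s ∈ Set.Icc (c - ε) c, f s = y := by
    have h1 : Set.Icc (f (c - ε)) (f c) ⊆ f '' Set.Icc (c - ε) c :=
      intermediate_value_Icc (by linarith)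
        (hcont.mono (Set.Icc_subset_Icc (by linarith) (by linarith)))
    obtain ⟨s, hsI, hfs⟩ := h1 ⟨le_max_left _ _, hyc.le⟩
    exact ⟨s, hsI, hfs⟩
  have ht : ∃ t ∈ Set.Icc c (c + ε), f t = y := by
    have h1 : Set.Icc (f (c + ε)) (f c) ⊆ f '' Set.Icc c (c + ε) :=
      intermediate_value_Icc' (by linarith)
        (hcont.mono (Set.Icc_subset_Icc hca.le hvI.2))
    obtain ⟨t, htI, hft⟩ := h1 ⟨le_max_right _ _, hyc.le⟩
    exact ⟨t, htI, hft⟩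
  obtain ⟨s, hsI, hfs⟩ := hs
  obtain ⟨t, htI, hft⟩ := ht
  have hsU : s ∈ U := hsub ⟨hsI.1, le_trans hsI.2 (by linarith)⟩
  have htU : t ∈ U := hsub ⟨le_trans (by linarith) htI.1, htI.2⟩
  have hst : s = t := hinj hsU htU (hfs.trans hft.symm)
  have hslt : s < c := lt_of_le_of_ne hsI.2 (fun h => by rw [h] at hfs; linarith)
  linarith [htI.1]

/-- A continuous, locally injective real function on an interval that takes equal
values at the endpoints forces the endpoints to coincide. -/
lemma inj_endpoints {f : ℝ → ℝ} {a b : ℝ} (hab : a ≤ b)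
    (hcont : ContinuousOn f (Set.Icc a b))
    (hloc : ∀ x ∈ Set.Icc a b, ∃ U ∈ nhdsWithin x (Set.Icc a b), Set.InjOn f U)
    (hfab : f a = f b) : a = b := by
  by_contra hne
  have hab' : a < b := hab.lt_of_ne hne
  have hne' : (Set.Icc a b).Nonempty := ⟨a, Set.left_mem_Icc.2 hab⟩
  obtain ⟨c, hcI, hcmax⟩ := isCompact_Icc.exists_isMaxOn hne' hcont
  obtain ⟨c', hc'I, hcmin⟩ := isCompact_Icc.exists_isMinOn hne' hcont
  have hmax : ∀ x ∈ Set.Icc a b, f x ≤ f c := fun x hx => hcmax hx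
  have hmin : ∀ x ∈ Set.Icc a b, f c' ≤ f x := fun x hx => hcmin hx
  by_cases h1 : f a < f c
  · have hca : a ≠ c := fun h => by rw [← h] at h1; exact lt_irrefl _ h1
    have hcb : c ≠ b := fun h => by rw [h, ← hfab] at h1; exact lt_irrefl _ h1
    exact aux_max hab' ⟨lt_of_le_of_ne hcI.1 hca, lt_of_le_of_ne hcI.2 hcb⟩
      hcont hmax hloc
  · by_cases h2 : f c' < f a
    · have hca : a ≠ c' := fun h => by rw [← h] at h2; exact lt_irrefl _ h2
      have hcb : c' ≠ b := fun h => by rw [h, ← hfab] at h2; exact lt_irrefl _ h2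
      refine aux_max (f := fun x => -(f x)) hab'
        ⟨lt_of_le_of_ne hc'I.1 hca, lt_of_le_of_ne hc'I.2 hcb⟩
        hcont.neg (fun x hx => neg_le_neg (hmin x hx)) ?_
      intro x hx
      obtain ⟨U, hU, hinj⟩ := hloc x hx
      exact ⟨U, hU, fun p hp r hr h => hinj hp hr (neg_injective h)⟩
    · push_neg at h1 h2
      have hconst : ∀ x ∈ Set.Icc a b, f x = f a := fun x hx =>
        le_antisymm (le_trans (hmax x hx) h1) (le_trans h2 (hmin x hx))
      have hmid : (a + b) / 2 ∈ Set.Icc a b := ⟨by linarith, by linarith⟩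
      refine aux_max hab' (c := (a + b) / 2) ⟨by linarith, by linarith⟩ hcont
        (fun x hx => ?_) hloc
      rw [hconst x hx, hconst _ hmid]

/-- A point with the same height whose real part lies between is on the horizontal
segment. -/
lemma mem_horiz_segment {z w p : ℂ} (hzw : z.im = w.im) (hp : p.im = z.im)
    (hr : p.re ∈ Set.uIcc z.re w.re) : p ∈ segment ℝ z w := by
  rw [← segment_eq_uIcc] at hr
  obtain ⟨s, t, hs, ht, hst, hre⟩ := hr
  refine ⟨s, t, hs, ht, hst, ?_⟩
  apply Complex.ext
  · simpa [Complex.add_re, Complex.smul_re] using hre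
  · simp only [Complex.add_im, Complex.smul_im, smul_eq_mul, hp]
    linear_combination z.im * hst - t * hzw

/-- Key lemma: if the whole horizontal segment between `z` and `w` lies in `S`,
then `q z = q w` forces `z = w`. -/
lemma seg_inj {q : ℂ → ℂ} {S : Set ℂ} (hq : ContinuousOn q S) (hloc : LocInjOn q S)
    (him : ∀ z ∈ S, (q z).im = z.im) {z w : ℂ} (hseg : segment ℝ z w ⊆ S)
    (hzw : z.im = w.im) (hre : z.re ≤ w.re) (hqe : q z = q w) : z = w := by
  set a := z.im with ha
  set φ : ℝ → ℂ := fun x => (x : ℂ) + (a : ℂ) * Complex.I with hφ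
  have hφre : ∀ x : ℝ, (φ x).re = x := by intro x; simp [hφ]
  have hφim : ∀ x : ℝ, (φ x).im = a := by intro x; simp [hφ]
  have hφcont : Continuous φ := by continuity
  have hφmem : ∀ x ∈ Set.Icc z.re w.re, φ x ∈ segment ℝ z w := by
    intro x hx
    refine mem_horiz_segment hzw (hφim x) ?_
    rw [hφre, Set.uIcc_of_le hre]
    exact hx
  have hφS : ∀ x ∈ Set.Icc z.re w.re, φ x ∈ S := fun x hx => hseg (hφmem x hx)
  set f : ℝ → ℝ := fun x => (q (φ x)).re with hf
  have hcont : ContinuousOn f (Set.Icc z.re w.re) := by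
    apply Complex.continuous_re.comp_continuousOn
    exact hq.comp hφcont.continuousOn hφS
  have hlocf : ∀ x ∈ Set.Icc z.re w.re,
      ∃ U ∈ nhdsWithin x (Set.Icc z.re w.re), Set.InjOn f U := by
    intro x hx
    obtain ⟨U, hU, hinj⟩ := hloc (φ x) (hφS x hx)
    rw [mem_nhdsWithin] at hU
    obtain ⟨V, hVo, hxV, hVU⟩ := hU
    refine ⟨φ ⁻¹' V ∩ Set.Icc z.re w.re, ?_, ?_⟩
    · rw [mem_nhdsWithin]
      exact ⟨φ ⁻¹' V, hVo.preimage hφcont, hxV, subset_rfl⟩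
    · intro p hp r hr hfpr
      have hqp : q (φ p) = q (φ r) := by
        apply Complex.ext hfpr
        rw [him _ (hφS p hp.2), him _ (hφS r hr.2), hφim, hφim]
      have h2 := hinj (hVU ⟨hp.1, hφS p hp.2⟩) (hVU ⟨hr.1, hφS r hr.2⟩) hqp
      have := congrArg Complex.re h2
      rwa [hφre, hφre] at this
  have h1 : φ z.re = z := by
    apply Complex.ext
    · exact hφre _
    · rw [hφim]
  have h2 : φ w.re = w := by
    apply Complex.ext
    · exact hφre _
    · rw [hφim]; exact hzw
  have hfz : f z.re = f w.re := by
    simp only [hf, h1, h2, hqe]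
  have := inj_endpoints hre hcont hlocf hfz
  exact Complex.ext this hzw

theorem projection_eq_implies_injective
    (D₁ D₂ : Set ℂ) (h₁o : IsOpen D₁) (h₁c : IsConnected D₁) (h₁x : CvxRe D₁)
    (h₂o : IsOpen D₂) (h₂c : IsConnected D₂) (h₂x : CvxRe D₂)
    (q : ℂ → ℂ) (hq : ContinuousOn q (D₁ ∪ D₂))
    (hloc : LocInjOn q (D₁ ∪ D₂))
    (him : ∀ z ∈ D₁ ∪ D₂, (q z).im = z.im)
    (hproj : Py (D₁ ∩ D₂) = Py (q '' D₁ ∩ q '' D₂)) :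
    Set.InjOn q (D₁ ∪ D₂) := by
  have key : ∀ z ∈ D₁ ∪ D₂, ∀ w ∈ D₁ ∪ D₂, z.im = w.im → z.re ≤ w.re →
      q z = q w → z = w := by
    intro z hz w hw hzw hre hqe
    have hcross : ∀ (hz1 : z ∈ D₁) (hw2 : w ∈ D₂), segment ℝ z w ⊆ D₁ ∪ D₂ := by
      intro hz1 hw2
      have hmem : z.im ∈ Py (q '' D₁ ∩ q '' D₂) :=
        ⟨q z, ⟨⟨z, hz1, rfl⟩, hqe ▸ ⟨w, hw2, rfl⟩⟩, him z hz⟩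
      rw [← hproj] at hmem
      obtain ⟨u, ⟨hu1, hu2⟩, hua⟩ := hmem
      intro p hp
      obtain ⟨s, t, hs, ht, hst, hpeq⟩ := hp
      have hpim : p.im = z.im := by
        rw [← hpeq]
        simp only [Complex.add_im, Complex.smul_im, smul_eq_mul]
        linear_combination z.im * hst - t * hzw
      have hpre : p.re ∈ Set.uIcc z.re w.re := by
        rw [← segment_eq_uIcc]
        exact ⟨s, t, hs, ht, hst, by rw [← hpeq]; simp [Complex.add_re, Complex.smul_re]⟩
      rcases uIcc_subset_uIcc_union_uIcc (b := u.re) hpre with h | h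
      · exact Or.inl (h₁x z hz1 u hu1 hua.symm (mem_horiz_segment hua.symm hpim h))
      · exact Or.inr (h₂x u hu2 w hw2 (hua.trans hzw)
          (mem_horiz_segment (hua.trans hzw) (hpim.trans hua.symm) h))
    have hcross' : ∀ (hz2 : z ∈ D₂) (hw1 : w ∈ D₁), segment ℝ z w ⊆ D₁ ∪ D₂ := by
      intro hz2 hw1
      have hmem : z.im ∈ Py (q '' D₁ ∩ q '' D₂) :=
        ⟨q z, ⟨hqe ▸ ⟨w, hw1, rfl⟩, ⟨z, hz2, rfl⟩⟩, him z hz⟩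
      rw [← hproj] at hmem
      obtain ⟨u, ⟨hu1, hu2⟩, hua⟩ := hmem
      intro p hp
      obtain ⟨s, t, hs, ht, hst, hpeq⟩ := hp
      have hpim : p.im = z.im := by
        rw [← hpeq]
        simp only [Complex.add_im, Complex.smul_im, smul_eq_mul]
        linear_combination z.im * hst - t * hzw
      have hpre : p.re ∈ Set.uIcc z.re w.re := by
        rw [← segment_eq_uIcc]
        exact ⟨s, t, hs, ht, hst, by rw [← hpeq]; simp [Complex.add_re, Complex.smul_re]⟩
      rcases uIcc_subset_uIcc_union_uIcc (b := u.re) hpre with h | h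
      · exact Or.inr (h₂x z hz2 u hu2 hua.symm (mem_horiz_segment hua.symm hpim h))
      · exact Or.inl (h₁x u hu1 w hw1 (hua.trans hzw)
          (mem_horiz_segment (hua.trans hzw) (hpim.trans hua.symm) h))
    have hseg : segment ℝ z w ⊆ D₁ ∪ D₂ := by
      rcases hz with hz1 | hz2 <;> rcases hw with hw1 | hw2
      · exact (h₁x z hz1 w hw1 hzw).trans Set.subset_union_left
      · exact hcross hz1 hw2
      · exact hcross' hz2 hw1
      · exact (h₂x z hz2 w hw2 hzw).trans Set.subset_union_right
    exact seg_inj hq hloc him hseg hzw hre hqe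
  intro z hz w hw hqe
  have hzw : z.im = w.im := by rw [← him z hz, ← him w hw, hqe]
  rcases le_total z.re w.re with h | h
  · exact key z hz w hw hzw h hqe
  · exact (key w hw z hz hzw.symm h hqe.symm).symm
end

section
/- Let D₁, D₂ ⊆ ℂ be domains convex in the direction of the real axis with nonempty intersection, and let q : D₁ ∪ D₂ → ℂ be a continuous, sense-preserving, locally injective map with Im q(z) = Im z for all z ∈ D₁ ∪ D₂. If both D₁ ∪ D₂ and q(D₁) ∪ q(D₂) are simply connected, then P_y(D₁ ∩ D₂) = P_y(q(D₁) ∩ q(D₂)). -/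
open Complex Set Metric

/-!
Since `Im q = Im` and `q` has positive Jacobian, `Re q` is strictly increasing along horizontal
segments. The inclusion `Py (D₁ ∩ D₂) ⊆ Py (q D₁ ∩ q D₂)` is then trivial, and as the smaller set
is open and nonempty it suffices to show that the larger one is an interval in which the smaller
one is relatively closed.

Interval: the images `q Dᵢ` have open interval slices. If at a height `y` between two heights of
`q D₁ ∩ q D₂` their slices were disjoint, some `p` at height `y` would separate them; a path in
`q D₁` and a path in `q D₂` joining a point below `p` to a point above it then lift through `exp`
from a common starting point (as branches of `log (z - p)` cut along the two horizontal rays from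
`p`) to paths whose endpoints differ by `2πi`, so they are not homotopic in `q D₁ ∪ q D₂`.

Closed: at a limit height `a` of `Py (D₁ ∩ D₂)` the slices of `D₁` and `D₂` overlap at nearby
heights, so `Re q (x + a i) ≤ Re q (x' + a i)` whenever `x < x'` lie in the slices of `D₁` and
`D₂` at height `a`. If these slices were disjoint, strict monotonicity would forbid
`q z₁ = q z₂` with `zᵢ ∈ Dᵢ`.
-/

open Filter Topology

def slice (S : Set ℂ) (y : ℝ) : Set ℝ := {x : ℝ | (x : ℂ) + y * I ∈ S}

section Slices

variable {S T : Set ℂ}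

theorem re_mem_slice_im {z : ℂ} (hz : z ∈ S) : z.re ∈ slice S z.im := by
  simpa [slice] using hz

theorem mem_Py_iff_slice_nonempty {a : ℝ} : a ∈ Py S ↔ (slice S a).Nonempty :=
  ⟨fun ⟨z, hz, hza⟩ => hza ▸ ⟨z.re, re_mem_slice_im hz⟩,
    fun ⟨x, hx⟩ => ⟨(x : ℂ) + a * I, hx, by simp⟩⟩

theorem isOpen_Py (hS : IsOpen S) : IsOpen (Py S) :=
  isOpenMap_im S hS

theorem ordConnected_Py (hS : IsPreconnected S) : (Py S).OrdConnected :=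
  (hS.image im continuous_im.continuousOn).ordConnected

theorem isOpen_slice (hS : IsOpen S) (y : ℝ) : IsOpen (slice S y) :=
  hS.preimage (by fun_prop)

theorem CvxRe.ordConnected_slice (hS : CvxRe S) (y : ℝ) : (slice S y).OrdConnected := by
  have hline : Convex ℝ (S ∩ im ⁻¹' {y}) := by
    refine convex_iff_segment_subset.2 fun z hz w hw => subset_inter
      (hS z hz.1 w hw.1 (hz.2.trans hw.2.symm)) ?_
    exact ((convex_singleton y).linear_preimage imLm).segment_subset hz.2 hw.2
  have hpre : slice S y = ofRealCLM ⁻¹' ((fun z => y * I + z) ⁻¹' (S ∩ im ⁻¹' {y})) := by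
    ext x
    simp [slice, add_comm]
  rw [hpre]
  exact ((hline.translate_preimage_right (y * I)).linear_preimage
    ofRealCLM.toLinearMap).ordConnected

theorem ordConnected_slice_union {y : ℝ} (hS : (slice S y).OrdConnected)
    (hT : (slice T y).OrdConnected) (hST : (slice S y ∩ slice T y).Nonempty) :
    (slice (S ∪ T) y).OrdConnected :=
  isPreconnected_iff_ordConnected.1 <|
    (isPreconnected_iff_ordConnected.2 hS).union' hST (isPreconnected_iff_ordConnected.2 hT)

end Slices

theorem exists_separating_of_disjoint {A B : Set ℝ} (hAo : IsOpen A) (hBo : IsOpen B)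
    (hA : A.OrdConnected) (hB : B.OrdConnected) (hAB : Disjoint A B) {a b : ℝ} (ha : a ∈ A)
    (hb : b ∈ B) (hab : a ≤ b) : ∃ x₀, (∀ x ∈ A, x < x₀) ∧ ∀ x ∈ B, x₀ < x := by
  obtain ⟨x₀, hx₀, hx₀A, hx₀B⟩ : ∃ x₀ ∈ Icc a b, x₀ ∉ A ∧ x₀ ∉ B := by
    by_contra! h
    obtain ⟨x, -, hxA, hxB⟩ := isPreconnected_Icc A B hAo hBo
      (fun x hx => or_iff_not_imp_left.2 (h x hx)) ⟨a, left_mem_Icc.2 hab, ha⟩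
      ⟨b, right_mem_Icc.2 hab, hb⟩
    exact hAB.le_bot ⟨hxA, hxB⟩
  exact ⟨x₀, fun x hx => lt_of_not_ge fun h => hx₀A (hA.out ha hx ⟨hx₀.1, h⟩),
    fun x hx => lt_of_not_ge fun h => hx₀B (hB.out hx hb ⟨h, hx₀.2⟩)⟩

theorem isOpen_image_of_strictMonoOn {f : ℝ → ℝ} {U : Set ℝ} (hU : IsOpen U)
    (hf : ContinuousOn f U) (hmono : StrictMonoOn f U) : IsOpen (f '' U) := by
  refine isOpen_iff_mem_nhds.2 ?_
  rintro _ ⟨x, hx, rfl⟩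
  obtain ⟨δ, hδ, hball⟩ := Metric.isOpen_iff.1 hU x hx
  have hIcc : Icc (x - δ / 2) (x + δ / 2) ⊆ U := by
    rw [← Real.closedBall_eq_Icc]
    exact (closedBall_subset_ball (half_lt_self hδ)).trans hball
  refine mem_of_superset (Ioo_mem_nhds (hmono (hIcc ⟨le_rfl, by linarith⟩) hx (by linarith))
    (hmono hx (hIcc ⟨by linarith, le_rfl⟩) (by linarith))) ?_
  rw [← (hf.mono hIcc).image_Ioo_of_strictMonoOn (by linarith) (hmono.mono hIcc)]
  exact image_mono (Ioo_subset_Icc_self.trans hIcc)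

theorem det_eq_re_apply_one (L : ℂ →L[ℝ] ℂ) (hL : ∀ v, (L v).im = v.im) :
    LinearMap.det L.toLinearMap = (L 1).re := by
  rw [← LinearMap.det_toMatrix basisOneI, Matrix.det_fin_two]
  simp [LinearMap.toMatrix_apply, hL]

/-- `q (x + y i) = u (x, y) + y i` with positive Jacobian, which is then `∂u/∂x`. -/
structure ImPreservingOrientedOn (q : ℂ → ℂ) (D : Set ℂ) : Prop where
  differentiableAt : ∀ z ∈ D, DifferentiableAt ℝ q z
  det_pos : ∀ z ∈ D, 0 < LinearMap.det (fderiv ℝ q z).toLinearMap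
  im_eq : ∀ z ∈ D, (q z).im = z.im

namespace ImPreservingOrientedOn

variable {q : ℂ → ℂ} {D S : Set ℂ}

theorem mono (hq : ImPreservingOrientedOn q D) (hSD : S ⊆ D) : ImPreservingOrientedOn q S :=
  ⟨fun z hz => hq.1 z (hSD hz), fun z hz => hq.2 z (hSD hz), fun z hz => hq.3 z (hSD hz)⟩

theorem continuousOn (hq : ImPreservingOrientedOn q D) : ContinuousOn q D :=
  fun z hz => (hq.differentiableAt z hz).continuousAt.continuousWithinAt

theorem im_fderiv_apply (hq : ImPreservingOrientedOn q D) (hD : IsOpen D) {z : ℂ} (hz : z ∈ D)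
    (v : ℂ) : (fderiv ℝ q z v).im = v.im := by
  have hcomp : HasFDerivAt (fun w => (q w).im) (imCLM.comp (fderiv ℝ q z)) z :=
    imCLM.hasFDerivAt.comp z (hq.differentiableAt z hz).hasFDerivAt
  have hlocal : HasFDerivAt (fun w => (q w).im) imCLM z :=
    imCLM.hasFDerivAt.congr_of_eventuallyEq <|
      eventually_of_mem (hD.mem_nhds hz) fun w hw => hq.im_eq w hw
  exact congr($(hcomp.unique hlocal) v)

theorem hasDerivAt_re (hq : ImPreservingOrientedOn q D) (hD : IsOpen D) {x y : ℝ}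
    (hz : (x : ℂ) + y * I ∈ D) :
    HasDerivAt (fun t : ℝ => (q (t + y * I)).re)
      (LinearMap.det (fderiv ℝ q (x + y * I)).toLinearMap) x := by
  rw [det_eq_re_apply_one _ (hq.im_fderiv_apply hD hz)]
  have hline : HasDerivAt (fun t : ℝ => (t : ℂ) + y * I) 1 x := by
    simpa using (ofRealCLM.hasDerivAt (x := x)).add_const (y * I)
  exact reCLM.hasFDerivAt.comp_hasDerivAt x
    ((hq.differentiableAt _ hz).hasFDerivAt.comp_hasDerivAt x hline)

theorem strictMonoOn_re (hq : ImPreservingOrientedOn q D) (hD : IsOpen D) {s : Set ℝ} {y : ℝ}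
    (hs : s.OrdConnected) (hsD : s ⊆ slice D y) :
    StrictMonoOn (fun x : ℝ => (q (x + y * I)).re) s := by
  refine strictMonoOn_of_deriv_pos hs.convex
    (fun x hx => (hq.hasDerivAt_re hD (hsD hx)).continuousAt.continuousWithinAt) fun x hx => ?_
  have hx' := hsD (interior_subset hx)
  rw [(hq.hasDerivAt_re hD hx').deriv]
  exact hq.det_pos _ hx'

theorem slice_image (hq : ImPreservingOrientedOn q S) (y : ℝ) :
    slice (q '' S) y = (fun x : ℝ => (q (x + y * I)).re) '' slice S y := by
  ext X
  constructor
  · rintro ⟨z, hz, hqz⟩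
    have hzy : z.im = y := by simpa [hqz] using (hq.im_eq z hz).symm
    refine ⟨z.re, hzy ▸ re_mem_slice_im hz, ?_⟩
    simp [← hzy, hqz]
  · rintro ⟨x, hx, rfl⟩
    refine ⟨_, hx, Complex.ext (by simp) ?_⟩
    simp [hq.im_eq _ hx]

theorem ordConnected_slice_image (hq : ImPreservingOrientedOn q S) (hSx : CvxRe S) (y : ℝ) :
    (slice (q '' S) y).OrdConnected := by
  rw [hq.slice_image]
  refine ((hSx.ordConnected_slice y).isPreconnected.image _ ?_).ordConnected
  exact continuous_re.comp_continuousOn (hq.continuousOn.comp (by fun_prop) fun x hx => hx)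

theorem isOpen_slice_image (hq : ImPreservingOrientedOn q S) (hS : IsOpen S) (hSx : CvxRe S)
    (y : ℝ) : IsOpen (slice (q '' S) y) := by
  rw [hq.slice_image]
  exact isOpen_image_of_strictMonoOn (isOpen_slice hS y)
    (fun x hx => (hq.hasDerivAt_re hS hx).continuousAt.continuousWithinAt)
    (hq.strictMonoOn_re hS (hSx.ordConnected_slice y) subset_rfl)

end ImPreservingOrientedOn

section Pinch

variable {q : ℂ → ℂ} {D₁ D₂ : Set ℂ}

theorem re_le_of_mem_closure_Py_inter (h₁o : IsOpen D₁) (h₂o : IsOpen D₂) (h₁x : CvxRe D₁)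
    (h₂x : CvxRe D₂) (hq : ImPreservingOrientedOn q (D₁ ∪ D₂)) {a x x' : ℝ}
    (ha : a ∈ closure (Py (D₁ ∩ D₂))) (hx : x ∈ slice D₁ a) (hx' : x' ∈ slice D₂ a)
    (hxx' : x ≤ x') : (q (x + a * I)).re ≤ (q (x' + a * I)).re := by
  have := mem_closure_iff_nhdsWithin_neBot.1 ha
  have hvert : ∀ {ξ : ℝ}, (ξ : ℂ) + a * I ∈ D₁ ∪ D₂ →
      Tendsto (fun y : ℝ => (q (ξ + y * I)).re) (𝓝[Py (D₁ ∩ D₂)] a) (𝓝 (q (ξ + a * I)).re) :=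
    fun {ξ} hξ => ((continuous_re.tendsto _).comp
      ((hq.differentiableAt _ hξ).continuousAt.tendsto.comp
        ((by fun_prop : Continuous fun y : ℝ => (ξ : ℂ) + y * I).tendsto a))).mono_left
      nhdsWithin_le_nhds
  refine le_of_tendsto_of_tendsto (hvert (.inl hx)) (hvert (.inr hx')) ?_
  have hnear : ∀ {ξ : ℝ} {D : Set ℂ}, IsOpen D → (ξ : ℂ) + a * I ∈ D →
      ∀ᶠ y in 𝓝[Py (D₁ ∩ D₂)] a, ξ ∈ slice D y :=
    fun hD hξ => nhdsWithin_le_nhds ((hD.preimage (by fun_prop)).mem_nhds hξ)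
  filter_upwards [hnear h₁o hx, hnear h₂o hx', self_mem_nhdsWithin] with y hxy hx'y hy
  have hI := ordConnected_slice_union (h₁x.ordConnected_slice y) (h₂x.ordConnected_slice y)
    (mem_Py_iff_slice_nonempty.1 hy)
  exact (hq.strictMonoOn_re (h₁o.union h₂o) hI subset_rfl).monotoneOn (.inl hxy) (.inr hx'y) hxx'

theorem re_lt_of_mem_closure_Py_inter (h₁o : IsOpen D₁) (h₂o : IsOpen D₂) (h₁x : CvxRe D₁)
    (h₂x : CvxRe D₂) (hq : ImPreservingOrientedOn q (D₁ ∪ D₂)) {a x x' : ℝ}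
    (ha : a ∈ closure (Py (D₁ ∩ D₂))) (ha' : a ∉ Py (D₁ ∩ D₂)) (hx : x ∈ slice D₁ a)
    (hx' : x' ∈ slice D₂ a) (hxx' : x < x') : (q (x + a * I)).re < (q (x' + a * I)).re := by
  obtain ⟨x'', hx''x, hx''⟩ := Filter.nonempty_of_mem (inter_mem self_mem_nhdsWithin
    (nhdsWithin_le_nhds ((isOpen_slice h₁o a).mem_nhds hx)) : Ioi x ∩ slice D₁ a ∈ 𝓝[>] x)
  have hx''x' : x'' < x' := lt_of_not_ge fun h =>
    ha' (mem_Py_iff_slice_nonempty.2 ⟨x', (h₁x.ordConnected_slice a).out hx hx'' ⟨hxx'.le, h⟩, hx'⟩)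
  calc (q (x + a * I)).re < (q (x'' + a * I)).re :=
        (hq.mono subset_union_left).strictMonoOn_re h₁o (h₁x.ordConnected_slice a) subset_rfl
          hx hx'' hx''x
    _ ≤ (q (x' + a * I)).re :=
        re_le_of_mem_closure_Py_inter h₁o h₂o h₁x h₂x hq ha hx'' hx' hx''x'.le

theorem closure_Py_inter_inter_Py_image_subset (h₁o : IsOpen D₁) (h₂o : IsOpen D₂)
    (h₁x : CvxRe D₁) (h₂x : CvxRe D₂) (hq : ImPreservingOrientedOn q (D₁ ∪ D₂)) :
    closure (Py (D₁ ∩ D₂)) ∩ Py (q '' D₁ ∩ q '' D₂) ⊆ Py (D₁ ∩ D₂) := by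
  rintro _ ⟨ha, _, ⟨⟨z₁, hz₁, rfl⟩, ⟨z₂, hz₂, hqz⟩⟩, rfl⟩
  rw [hq.im_eq z₁ (.inl hz₁)] at ha ⊢
  by_contra ha'
  have him : z₂.im = z₁.im := by rw [← hq.im_eq z₂ (.inr hz₂), hqz, hq.im_eq z₁ (.inl hz₁)]
  have hx₁ : z₁.re ∈ slice D₁ z₁.im := re_mem_slice_im hz₁
  have hx₂ : z₂.re ∈ slice D₂ z₁.im := him ▸ re_mem_slice_im hz₂
  rcases lt_trichotomy z₁.re z₂.re with h | h | h
  · have := re_lt_of_mem_closure_Py_inter h₁o h₂o h₁x h₂x hq ha ha' hx₁ hx₂ h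
    rw [re_add_im, ← him, re_add_im, hqz] at this
    exact this.false
  · exact ha' (mem_Py_iff_slice_nonempty.2 ⟨_, hx₁, h ▸ hx₂⟩)
  · rw [inter_comm] at ha ha'
    have := re_lt_of_mem_closure_Py_inter h₂o h₁o h₂x h₁x (union_comm D₁ D₂ ▸ hq) ha ha' hx₂ hx₁ h
    rw [re_add_im, ← him, re_add_im, hqz] at this
    exact this.false

end Pinch

theorem sub_mem_slitPlane_of_slice_lt {E : Set ℂ} {x₀ y : ℝ} (h : ∀ x ∈ slice E y, x < x₀) {z : ℂ}
    (hz : z ∈ E) : (x₀ + y * I) - z ∈ slitPlane := by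
  rcases eq_or_ne z.im y with rfl | hzy
  · simpa [mem_slitPlane_iff] using h _ (re_mem_slice_im hz)
  · simpa [mem_slitPlane_iff, sub_eq_zero] using Or.inr hzy.symm

theorem sub_mem_slitPlane_of_lt_slice {E : Set ℂ} {x₀ y : ℝ} (h : ∀ x ∈ slice E y, x₀ < x) {z : ℂ}
    (hz : z ∈ E) : z - (x₀ + y * I) ∈ slitPlane := by
  rcases eq_or_ne z.im y with rfl | hzy
  · simpa [mem_slitPlane_iff] using h _ (re_mem_slice_im hz)
  · simpa [mem_slitPlane_iff, sub_eq_zero] using Or.inr hzy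

theorem log_neg_add_pi_mul_I_of_im_pos {w : ℂ} (hw : 0 < w.im) :
    log (-w) + Real.pi * I = log w := by
  apply Complex.ext <;> simp [log_re, log_im, arg_neg_eq_arg_sub_pi_of_im_pos hw]

theorem log_neg_add_pi_mul_I_of_im_neg {w : ℂ} (hw : w.im < 0) :
    log (-w) + Real.pi * I = log w + 2 * Real.pi * I := by
  apply Complex.ext <;> simp [log_re, log_im, arg_neg_eq_arg_add_pi_of_im_neg hw]
  ring

theorem Path.not_homotopic_of_mem_slitPlane {w₁ w₃ : {z : ℂ // z ≠ 0}} (γ₁ γ₂ : Path w₁ w₃)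
    (h₁ : ∀ t, -(γ₁ t : ℂ) ∈ slitPlane) (h₂ : ∀ t, (γ₂ t : ℂ) ∈ slitPlane)
    (hw₁ : (w₁ : ℂ).im < 0) (hw₃ : 0 < (w₃ : ℂ).im) : ¬ γ₁.Homotopic γ₂ := by
  intro h
  let p : ℂ → {z : ℂ // z ≠ 0} := fun z => ⟨exp z, exp_ne_zero z⟩
  have cov : IsCoveringMap p := Complex.isCoveringMap_exp
  -- lifts of `γ₁` and `γ₂` through `exp`, by the branches of `log` cut along `[0, ∞)` and `(-∞, 0]`
  let Λ₁ : C(unitInterval, ℂ) := ⟨fun t => log (-(γ₁ t : ℂ)) + Real.pi * I,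
    continuous_iff_continuousAt.2 fun t =>
      ((continuous_subtype_val.comp γ₁.continuous).neg.continuousAt.clog (h₁ t)).add
        continuousAt_const⟩
  let Λ₂ : C(unitInterval, ℂ) := ⟨fun t => log (γ₂ t : ℂ) + 2 * Real.pi * I,
    continuous_iff_continuousAt.2 fun t =>
      ((continuous_subtype_val.comp γ₂.continuous).continuousAt.clog (h₂ t)).add
        continuousAt_const⟩
  have hΛ₁ : p ∘ Λ₁ = γ₁ := funext fun t => Subtype.ext <| by
    simp [p, Λ₁, exp_add, exp_log (neg_ne_zero.2 (γ₁ t).2)]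
  have hΛ₂ : p ∘ Λ₂ = γ₂ := funext fun t => Subtype.ext <| by
    simp [p, Λ₂, exp_add, exp_log (γ₂ t).2]
  have h0 : Λ₂ 0 = Λ₁ 0 := by simp [Λ₁, Λ₂, log_neg_add_pi_mul_I_of_im_neg hw₁]
  have s₁ : γ₁.toContinuousMap 0 = p (Λ₁ 0) := (congr_fun hΛ₁ 0).symm
  have s₂ : γ₂.toContinuousMap 0 = p (Λ₁ 0) := h0 ▸ (congr_fun hΛ₂ 0).symm
  have h1 := cov.liftPath_apply_one_eq_of_homotopicRel h (Λ₁ 0) s₁ s₂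
  rw [← (cov.eq_liftPath_iff' s₁).2 ⟨hΛ₁, rfl⟩, ← (cov.eq_liftPath_iff' s₂).2 ⟨hΛ₂, h0⟩] at h1
  simp [Λ₁, Λ₂, log_neg_add_pi_mul_I_of_im_pos hw₃] at h1

theorem not_simplyConnectedSpace_union_of_mem_slitPlane {E₁ E₂ : Set ℂ} {p w₁ w₃ : ℂ}
    (h₁ : JoinedIn E₁ w₁ w₃) (h₂ : JoinedIn E₂ w₁ w₃)
    (hE₁ : ∀ z ∈ E₁, p - z ∈ slitPlane) (hE₂ : ∀ z ∈ E₂, z - p ∈ slitPlane)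
    (hw₁ : w₁.im < p.im) (hw₃ : p.im < w₃.im) : ¬ SimplyConnectedSpace ↥(E₁ ∪ E₂) := by
  intro hsc
  have hp : ∀ z ∈ E₁ ∪ E₂, z - p ≠ 0 := by
    rintro z (hz | hz) h0
    · exact slitPlane_ne_zero (hE₁ z hz) (by rw [← neg_sub, h0, neg_zero])
    · exact slitPlane_ne_zero (hE₂ z hz) h0
  let f : C(↥(E₁ ∪ E₂), {z : ℂ // z ≠ 0}) := ⟨fun z => ⟨z - p, hp z z.2⟩, by fun_prop⟩
  let Γ₁ : Path (⟨w₁, .inl h₁.source_mem⟩ : ↥(E₁ ∪ E₂)) ⟨w₃, .inl h₁.target_mem⟩ :=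
    { toFun := fun t => ⟨h₁.somePath t, .inl (h₁.somePath_mem t)⟩
      source' := by simp
      target' := by simp }
  let Γ₂ : Path (⟨w₁, .inl h₁.source_mem⟩ : ↥(E₁ ∪ E₂)) ⟨w₃, .inl h₁.target_mem⟩ :=
    { toFun := fun t => ⟨h₂.somePath t, .inr (h₂.somePath_mem t)⟩
      source' := by simp
      target' := by simp }
  refine Path.not_homotopic_of_mem_slitPlane (Γ₁.map f.continuous) (Γ₂.map f.continuous)
    (fun t => ?_) (fun t => hE₂ _ (h₂.somePath_mem t)) (by simpa [f] using hw₁)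
    (by simpa [f] using hw₃)
    ((SimplyConnectedSpace.paths_homotopic Γ₁ Γ₂).map f)
  simpa [f, Γ₁] using hE₁ _ (h₁.somePath_mem t)

theorem ordConnected_Py_inter {E₁ E₂ : Set ℂ} (h₁ : IsPathConnected E₁) (h₂ : IsPathConnected E₂)
    (h₁o : ∀ y, IsOpen (slice E₁ y)) (h₂o : ∀ y, IsOpen (slice E₂ y))
    (h₁s : ∀ y, (slice E₁ y).OrdConnected) (h₂s : ∀ y, (slice E₂ y).OrdConnected)
    (hsc : SimplyConnectedSpace ↥(E₁ ∪ E₂)) : (Py (E₁ ∩ E₂)).OrdConnected := by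
  refine ⟨fun _ hy₁ _ hy₃ y hy => ?_⟩
  by_contra hy'
  obtain ⟨w₁, hw₁, rfl⟩ := hy₁
  obtain ⟨w₃, hw₃, rfl⟩ := hy₃
  have hlt₁ : w₁.im < y := hy.1.lt_of_ne (by rintro rfl; exact hy' ⟨w₁, hw₁, rfl⟩)
  have hlt₃ : y < w₃.im := hy.2.lt_of_ne' (by rintro rfl; exact hy' ⟨w₃, hw₃, rfl⟩)
  obtain ⟨x₁, hx₁⟩ := mem_Py_iff_slice_nonempty.1 <|
    (ordConnected_Py h₁.isConnected.isPreconnected).out ⟨w₁, hw₁.1, rfl⟩ ⟨w₃, hw₃.1, rfl⟩ hy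
  obtain ⟨x₂, hx₂⟩ := mem_Py_iff_slice_nonempty.1 <|
    (ordConnected_Py h₂.isConnected.isPreconnected).out ⟨w₁, hw₁.2, rfl⟩ ⟨w₃, hw₃.2, rfl⟩ hy
  have hdisj : Disjoint (slice E₁ y) (slice E₂ y) :=
    disjoint_iff_inter_eq_empty.2 <| not_nonempty_iff_eq_empty.1 fun h =>
      hy' (mem_Py_iff_slice_nonempty.2 h)
  have hj₁ := h₁.joinedIn _ hw₁.1 _ hw₃.1
  have hj₂ := h₂.joinedIn _ hw₁.2 _ hw₃.2
  rcases le_total x₁ x₂ with h | h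
  · obtain ⟨x₀, hA, hB⟩ :=
      exists_separating_of_disjoint (h₁o y) (h₂o y) (h₁s y) (h₂s y) hdisj hx₁ hx₂ h
    exact not_simplyConnectedSpace_union_of_mem_slitPlane hj₁ hj₂
      (fun _ => sub_mem_slitPlane_of_slice_lt hA) (fun _ => sub_mem_slitPlane_of_lt_slice hB)
      (by simpa using hlt₁) (by simpa using hlt₃) hsc
  · obtain ⟨x₀, hB, hA⟩ :=
      exists_separating_of_disjoint (h₂o y) (h₁o y) (h₂s y) (h₁s y) hdisj.symm hx₂ hx₁ h
    exact not_simplyConnectedSpace_union_of_mem_slitPlane hj₂ hj₁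
      (fun _ => sub_mem_slitPlane_of_slice_lt hB) (fun _ => sub_mem_slitPlane_of_lt_slice hA)
      (by simpa using hlt₁) (by simpa using hlt₃) (union_comm E₁ E₂ ▸ hsc)

theorem simply_connected_implies_projection_eq_general
    (D₁ D₂ : Set ℂ) (h₁o : IsOpen D₁) (h₁c : IsConnected D₁) (h₁x : CvxRe D₁)
    (h₂o : IsOpen D₂) (h₂c : IsConnected D₂) (h₂x : CvxRe D₂)
    (hne : (D₁ ∩ D₂).Nonempty)
    (q : ℂ → ℂ)
    (hdiff : ∀ z ∈ D₁ ∪ D₂, DifferentiableAt ℝ q z)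
    (hJ : ∀ z ∈ D₁ ∪ D₂, 0 < LinearMap.det (fderiv ℝ q z).toLinearMap)
    (him : ∀ z ∈ D₁ ∪ D₂, (q z).im = z.im)
    (hsc₂ : SimplyConnectedSpace ↥(q '' D₁ ∪ q '' D₂)) :
    Py (D₁ ∩ D₂) = Py (q '' D₁ ∩ q '' D₂) := by
  have hq : ImPreservingOrientedOn q (D₁ ∪ D₂) := ⟨hdiff, hJ, him⟩
  have hq₁ := hq.mono subset_union_left
  have hq₂ := hq.mono subset_union_right
  have hsub : Py (D₁ ∩ D₂) ⊆ Py (q '' D₁ ∩ q '' D₂) := fun _ ⟨z, hz, hza⟩ =>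
    ⟨q z, ⟨mem_image_of_mem q hz.1, mem_image_of_mem q hz.2⟩, (hq₁.im_eq z hz.1).trans hza⟩
  have himage : (Py (q '' D₁ ∩ q '' D₂)).OrdConnected := ordConnected_Py_inter
    ((h₁o.isConnected_iff_isPathConnected.1 h₁c).image' hq₁.continuousOn)
    ((h₂o.isConnected_iff_isPathConnected.1 h₂c).image' hq₂.continuousOn)
    (hq₁.isOpen_slice_image h₁o h₁x) (hq₂.isOpen_slice_image h₂o h₂x)
    (hq₁.ordConnected_slice_image h₁x) (hq₂.ordConnected_slice_image h₂x) hsc₂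
  obtain ⟨ζ, hζ⟩ := hne
  exact hsub.antisymm <| himage.isPreconnected.subset_of_closure_inter_subset
    (isOpen_Py (h₁o.inter h₂o)) ⟨ζ.im, hsub ⟨ζ, hζ, rfl⟩, ζ, hζ, rfl⟩
    (closure_Py_inter_inter_Py_image_subset h₁o h₂o h₁x h₂x hq)

theorem simply_connected_implies_projection_eq
    (D₁ D₂ : Set ℂ) (h₁o : IsOpen D₁) (h₁c : IsConnected D₁) (h₁x : CvxRe D₁)
    (h₂o : IsOpen D₂) (h₂c : IsConnected D₂) (h₂x : CvxRe D₂)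
    (hne : (D₁ ∩ D₂).Nonempty)
    (q : ℂ → ℂ) (hq : ContinuousOn q (D₁ ∪ D₂))
    (hdiff : ∀ z ∈ D₁ ∪ D₂, DifferentiableAt ℝ q z)
    (hJ : ∀ z ∈ D₁ ∪ D₂, 0 < LinearMap.det (fderiv ℝ q z).toLinearMap)
    (hloc : LocInjOn q (D₁ ∪ D₂))
    (him : ∀ z ∈ D₁ ∪ D₂, (q z).im = z.im)
    (hsc₁ : SimplyConnectedSpace ↥(D₁ ∪ D₂))
    (hsc₂ : SimplyConnectedSpace ↥(q '' D₁ ∪ q '' D₂)) :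
    Py (D₁ ∩ D₂) = Py (q '' D₁ ∩ q '' D₂) :=
  simply_connected_implies_projection_eq_general D₁ D₂ h₁o h₁c h₁x h₂o h₂c h₂x hne q hdiff hJ him
    hsc₂
end

section
/- Let f = h + conj(g) be harmonic in the unit disk 𝔻 with positive Jacobian J_f = |h'|² − |g'|² > 0 in 𝔻, and suppose Λ_y((h−g)(𝔻)) = Λ_y(f(𝔻)). If f is injective on 𝔻 and f(𝔻) is the union of two non-disjoint domains each convex in the direction of the real axis, then h − g is injective on 𝔻 and (h−g)(𝔻) is the union of two non-disjoint domains each convex in the direction of the real axis. -/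
/-!
Since `f - (h - g) = 2 Re g` is real, the map `φ = (h - g) ∘ f⁻¹` preserves imaginary parts, and it
is a local homeomorphism of `f(𝔻)` because `f` and `h - g` both have invertible real derivatives
(`|h' - g'| ≥ |h'| - |g'| > 0`). Let `φ w₁ = φ w₂`, so that `w₁, w₂` lie on one horizontal line.
If the segment `[w₁, w₂]` lies in `f(𝔻)`, the real part of `φ` along it is a continuous, locally
injective function taking equal values at both ends, which is impossible. Otherwise `w₁` and `w₂`
lie in different pieces `D₁`, `D₂`, so the slice of `(h - g)(𝔻) = φ(D₁ ∪ D₂)` at their height is the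
union of the connected sets `φ(Dᵢ ∩ line)`, which share the point `φ w₁`. By the hypothesis on `Λ_y`
the slice of `f(𝔻)` is then connected as well, so it contains `[w₁, w₂]` after all. Hence `φ` is
injective, and it carries the decomposition of `f(𝔻)` to one of `(h - g)(𝔻)`.
-/

open Complex Set Metric

open Filter Topology Function ComplexConjugate

lemma convex_setOf_im_eq (a : ℝ) : Convex ℝ {z : ℂ | z.im = a} :=
  convex_hyperplane Complex.imLm.isLinear a

lemma cvxRe_iff_convex_inter_setOf_im_eq {D : Set ℂ} :
    CvxRe D ↔ ∀ a : ℝ, Convex ℝ (D ∩ {z | z.im = a}) := by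
  refine ⟨fun hD a => convex_iff_segment_subset.2 ?_, fun hD p hp q hq hpq => ?_⟩
  · rintro p ⟨hp, hpa⟩ q ⟨hq, hqa⟩
    exact subset_inter (hD p hp q hq (hpa.trans hqa.symm))
      ((convex_setOf_im_eq a).segment_subset hpa hqa)
  · exact ((hD p.im).segment_subset ⟨hp, rfl⟩ ⟨hq, hpq.symm⟩).trans inter_subset_left

lemma IsPreconnected.convex_of_subset_setOf_im_eq {S : Set ℂ} {a : ℝ} (hS : IsPreconnected S)
    (hSa : S ⊆ {z | z.im = a}) : Convex ℝ S := by
  refine convex_iff_segment_subset.2 fun p hp q hq t ht => ?_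
  have hta : t.im = a := (convex_setOf_im_eq a).segment_subset (hSa hp) (hSa hq) ht
  have htre : t.re ∈ re '' S := by
    refine (hS.image _ continuous_re.continuousOn).convex.segment_subset
      ⟨p, hp, rfl⟩ ⟨q, hq, rfl⟩ ?_
    rw [← Complex.reLm_coe, ← LinearMap.coe_toAffineMap, ← image_segment]
    exact mem_image_of_mem _ ht
  obtain ⟨s, hs, hst⟩ := htre
  rwa [← Complex.ext hst ((hSa hs).trans hta.symm)]

lemma image_inter_setOf_im_eq {φ : ℂ → ℂ} {D : Set ℂ} (hφ : ∀ w ∈ D, (φ w).im = w.im) (a : ℝ) :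
    φ '' D ∩ {z | z.im = a} = φ '' (D ∩ {z | z.im = a}) := by
  ext u
  constructor
  · rintro ⟨⟨w, hw, rfl⟩, ha⟩
    exact ⟨w, ⟨hw, (hφ w hw).symm.trans ha⟩, rfl⟩
  · rintro ⟨w, ⟨hw, ha⟩, rfl⟩
    exact ⟨⟨w, hw, rfl⟩, (hφ w hw).trans ha⟩

lemma CvxRe.image {φ : ℂ → ℂ} {D : Set ℂ} (hD : CvxRe D) (hφc : ContinuousOn φ D)
    (hφ : ∀ w ∈ D, (φ w).im = w.im) : CvxRe (φ '' D) := by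
  rw [cvxRe_iff_convex_inter_setOf_im_eq] at hD ⊢
  intro a
  rw [image_inter_setOf_im_eq hφ]
  refine ((hD a).isPreconnected.image φ (hφc.mono inter_subset_left)).convex_of_subset_setOf_im_eq
    (a := a) ?_
  rintro _ ⟨w, ⟨hw, ha⟩, rfl⟩
  exact (hφ w hw).trans ha

lemma ContinuousOn.ne_of_forall_injOn_nhds {ρ : ℝ → ℝ} {a b : ℝ} (hab : a < b)
    (hρ : ContinuousOn ρ (Icc a b)) (hloc : ∀ c ∈ Ioo a b, ∃ U ∈ 𝓝 c, InjOn ρ U) :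
    ρ a ≠ ρ b := by
  intro hρab
  obtain ⟨c, hc, hextr⟩ := exists_Ioo_extr_on_Icc hab hρ hρab
  obtain ⟨U, hU, hinj⟩ := hloc c hc
  obtain ⟨l, u, ⟨hlc, hcu⟩, hsub⟩ :=
    mem_nhds_iff_exists_Ioo_subset.1 (inter_mem hU (Icc_mem_nhds hc.1 hc.2))
  obtain ⟨p, hlp, hpc⟩ := exists_between hlc
  obtain ⟨q, hcq, hqu⟩ := exists_between hcu
  have hp : p ∈ Ioo l u := ⟨hlp, hpc.trans hcu⟩
  have hq : q ∈ Ioo l u := ⟨hlc.trans hcq, hqu⟩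
  have hc' : c ∈ Ioo l u := ⟨hlc, hcu⟩
  have hp_ext := (hsub hp).2
  have hq_ext := (hsub hq).2
  rcases (hρ.mono fun x hx => (hsub hx).2).strictMonoOn_of_injOn_Ioo (hlc.trans hcu)
    (hinj.mono fun x hx => (hsub hx).1) with hmono | hanti
  · have := hmono hp hc' hpc
    have := hmono hc' hq hcq
    rcases hextr with hmin | hmax
    · linarith [isMinOn_iff.1 hmin p hp_ext]
    · linarith [isMaxOn_iff.1 hmax q hq_ext]
  · have := hanti hp hc' hpc
    have := hanti hc' hq hcq
    rcases hextr with hmin | hmax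
    · linarith [isMinOn_iff.1 hmin q hq_ext]
    · linarith [isMaxOn_iff.1 hmax p hp_ext]

lemma eq_of_segment_subset {φ : ℂ → ℂ} {Ω : Set ℂ} (hφc : ContinuousOn φ Ω)
    (hφ : ∀ w ∈ Ω, (φ w).im = w.im) (hloc : LocInjOn φ Ω) {w₁ w₂ : ℂ}
    (hseg : segment ℝ w₁ w₂ ⊆ Ω) (hw : φ w₁ = φ w₂) : w₁ = w₂ := by
  by_contra hne
  set γ : ℝ → ℂ := ⇑(AffineMap.lineMap (k := ℝ) w₁ w₂)
  have hγc : Continuous γ := AffineMap.lineMap_continuous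
  have hγΩ : MapsTo γ (Icc 0 1) Ω := fun t ht =>
    hseg (segment_eq_image_lineMap ℝ w₁ w₂ ▸ mem_image_of_mem γ ht)
  have him : w₁.im = w₂.im := by
    rw [← hφ w₁ (hseg (left_mem_segment ℝ w₁ w₂)), hw, hφ w₂ (hseg (right_mem_segment ℝ w₁ w₂))]
  have hγim : ∀ t, (γ t).im = w₁.im := fun t => by simp [γ, AffineMap.lineMap_apply, ← him]
  refine (continuous_re.comp_continuousOn (hφc.comp hγc.continuousOn hγΩ)).ne_of_forall_injOn_nhds
    zero_lt_one (fun t ht => ?_) ?_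
  · obtain ⟨U, hU, hinj⟩ := hloc (γ t) (hγΩ (Ioo_subset_Icc_self ht))
    refine ⟨γ ⁻¹' (U ∩ Ω), ?_, fun s hs s' hs' hss' => ?_⟩
    · rw [← nhdsWithin_eq_nhds.2 (Icc_mem_nhds ht.1 ht.2)]
      exact hγc.continuousWithinAt.tendsto_nhdsWithin hγΩ (inter_mem hU self_mem_nhdsWithin)
    · refine (AffineMap.lineMap_injective ℝ hne) (hinj hs.1 hs'.1 (Complex.ext hss' ?_))
      rw [hφ _ hs.2, hφ _ hs'.2, hγim, hγim]
  · simpa [γ] using congrArg re hw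

lemma mem_ly_image_union {φ : ℂ → ℂ} {D₁ D₂ : Set ℂ} (hφc : ContinuousOn φ (D₁ ∪ D₂))
    (hφ : ∀ w ∈ D₁ ∪ D₂, (φ w).im = w.im) (hD₁ : CvxRe D₁) (hD₂ : CvxRe D₂) {w₁ w₂ : ℂ}
    (hw₁ : w₁ ∈ D₁) (hw₂ : w₂ ∈ D₂) (hw : φ w₁ = φ w₂) : w₁.im ∈ Ly (φ '' (D₁ ∪ D₂)) := by
  have him : w₂.im = w₁.im := by
    rw [← hφ w₁ (Or.inl hw₁), hw, hφ w₂ (Or.inr hw₂)]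
  have hslice : ∀ D ⊆ D₁ ∪ D₂, CvxRe D → IsPreconnected (φ '' (D ∩ {z | z.im = w₁.im})) :=
    fun D hD hcvx => (cvxRe_iff_convex_inter_setOf_im_eq.1 hcvx _).isPreconnected.image _
      (hφc.mono (inter_subset_left.trans hD))
  have hφw₁ : φ w₁ ∈ φ '' (D₁ ∩ {z | z.im = w₁.im}) := mem_image_of_mem φ ⟨hw₁, rfl⟩
  have hφw₂ : φ w₁ ∈ φ '' (D₂ ∩ {z | z.im = w₁.im}) := hw ▸ mem_image_of_mem φ ⟨hw₂, him⟩
  rw [Ly, mem_ofPred_eq, image_inter_setOf_im_eq hφ, union_inter_distrib_right, image_union]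
  exact ⟨⟨φ w₁, Or.inl hφw₁⟩, (hslice D₁ subset_union_left hD₁).union (φ w₁) hφw₁ hφw₂
    (hslice D₂ subset_union_right hD₂)⟩

lemma injOn_union_of_cvxRe {φ : ℂ → ℂ} {D₁ D₂ : Set ℂ} (hφc : ContinuousOn φ (D₁ ∪ D₂))
    (hφ : ∀ w ∈ D₁ ∪ D₂, (φ w).im = w.im) (hloc : LocInjOn φ (D₁ ∪ D₂))
    (hD₁ : CvxRe D₁) (hD₂ : CvxRe D₂) (hLy : Ly (φ '' (D₁ ∪ D₂)) ⊆ Ly (D₁ ∪ D₂)) :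
    InjOn φ (D₁ ∪ D₂) := by
  intro w₁ hw₁ w₂ hw₂ hw
  refine eq_of_segment_subset hφc hφ hloc ?_ hw
  have him : w₁.im = w₂.im := by rw [← hφ w₁ hw₁, hw, hφ w₂ hw₂]
  have hseg_of_mem : w₁.im ∈ Ly (D₁ ∪ D₂) → segment ℝ w₁ w₂ ⊆ D₁ ∪ D₂ := fun h =>
    ((h.isPreconnected.convex_of_subset_setOf_im_eq inter_subset_right).segment_subset
      ⟨hw₁, rfl⟩ ⟨hw₂, him.symm⟩).trans inter_subset_left
  rcases hw₁ with h₁ | h₁ <;> rcases hw₂ with h₂ | h₂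
  · exact (hD₁ _ h₁ _ h₂ him).trans subset_union_left
  · exact hseg_of_mem (hLy (mem_ly_image_union hφc hφ hD₁ hD₂ h₁ h₂ hw))
  · exact hseg_of_mem (him ▸ hLy (mem_ly_image_union hφc hφ hD₁ hD₂ h₂ h₁ hw.symm))
  · exact (hD₂ _ h₁ _ h₂ him).trans subset_union_right

lemma isLocalHomeomorphOn_of_hasStrictFDerivAt {𝕜 E : Type*} [NontriviallyNormedField 𝕜]
    [CompleteSpace 𝕜] [NormedAddCommGroup E] [NormedSpace 𝕜 E] [FiniteDimensional 𝕜 E]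
    {f : E → E} {f' : E → E →L[𝕜] E} {s : Set E} (hf : ∀ x ∈ s, HasStrictFDerivAt f (f' x) x)
    (hf' : ∀ x ∈ s, Injective (f' x)) : IsLocalHomeomorphOn f s := by
  have := FiniteDimensional.complete 𝕜 E
  intro x hx
  let e : E ≃L[𝕜] E :=
    (LinearEquiv.ofInjectiveEndo (f' x).toLinearMap (hf' x hx)).toContinuousLinearEquiv
  have he : HasStrictFDerivAt f (e : E →L[𝕜] E) x := hf x hx
  exact ⟨he.toOpenPartialHomeomorph f, he.mem_toOpenPartialHomeomorph_source,
    he.toOpenPartialHomeomorph_coe.symm⟩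

namespace IsLocalHomeomorphOn

variable {X Y : Type*} [TopologicalSpace X] [TopologicalSpace Y] {f : X → Y} {s : Set X}

lemma congr {f₁ : X → Y} (hf : IsLocalHomeomorphOn f s) (hs : IsOpen s) (h : EqOn f f₁ s) :
    IsLocalHomeomorphOn f₁ s := by
  refine IsLocalHomeomorphOn.mk f₁ s fun x hx => ?_
  obtain ⟨e, hxe, rfl⟩ := hf x hx
  exact ⟨e.restrOpen s hs, ⟨hxe, hx⟩, fun y hy => (h hy.2).symm⟩

lemma isOpen_image_of_subset (hf : IsLocalHomeomorphOn f s) {U : Set X} (hU : IsOpen U)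
    (hUs : U ⊆ s) : IsOpen (f '' U) := by
  refine isOpen_iff_mem_nhds.2 ?_
  rintro _ ⟨x, hx, rfl⟩
  rw [← hf.map_nhds_eq (hUs hx)]
  exact image_mem_map (hU.mem_nhds hx)

end IsLocalHomeomorphOn

lemma IsLocalHomeomorphOn.locInjOn {q : ℂ → ℂ} {S : Set ℂ} (hq : IsLocalHomeomorphOn q S) :
    LocInjOn q S := by
  intro z hz
  obtain ⟨e, hze, rfl⟩ := hq z hz
  exact ⟨e.source, mem_nhdsWithin_of_mem_nhds (e.open_source.mem_nhds hze), e.injOn⟩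

lemma injective_restrictScalars_add_conj_comp {A C : ℂ →L[ℂ] ℂ} (hAC : ‖C 1‖ < ‖A 1‖) :
    Injective (A.restrictScalars ℝ + conjCLE.toContinuousLinearMap.comp (C.restrictScalars ℝ)) := by
  refine (injective_iff_map_eq_zero _).2 fun w hw => ?_
  have hmul : ∀ L : ℂ →L[ℂ] ℂ, L w = w * L 1 := fun L => by
    rw [← smul_eq_mul, ← L.map_smul, smul_eq_mul, mul_one]
  have hnorm : ‖A 1‖ * ‖w‖ = ‖C 1‖ * ‖w‖ := by
    simp only [add_apply, ContinuousLinearMap.coe_restrictScalars',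
      ContinuousLinearMap.comp_apply, ContinuousLinearEquiv.coe_coe, conjCLE_apply,
      add_eq_zero_iff_eq_neg] at hw
    have := congrArg norm hw
    rw [norm_neg, Complex.norm_conj, hmul A, hmul C, norm_mul, norm_mul] at this
    linarith
  by_contra hw0
  exact hAC.ne' (mul_right_cancel₀ (norm_ne_zero_iff.2 hw0) hnorm)

lemma isLocalHomeomorphOn_add_conj {h g : ℂ → ℂ} {s : Set ℂ} (hs : IsOpen s)
    (hh : DifferentiableOn ℂ h s) (hg : DifferentiableOn ℂ g s)
    (hJ : ∀ z ∈ s, ‖deriv g z‖ < ‖deriv h z‖) :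
    IsLocalHomeomorphOn (fun w => h w + conj (g w)) s := by
  refine isLocalHomeomorphOn_of_hasStrictFDerivAt (fun z hz => ?_)
    (fun z hz => injective_restrictScalars_add_conj_comp (hJ z hz))
  have hh' := ((hh.analyticAt (hs.mem_nhds hz)).hasStrictFDerivAt).restrictScalars ℝ
  have hg' := ((hg.analyticAt (hs.mem_nhds hz)).hasStrictFDerivAt).restrictScalars ℝ
  exact hh'.add (conjCLE.hasStrictFDerivAt.comp z hg')

lemma isLocalHomeomorphOn_sub {h g : ℂ → ℂ} {s : Set ℂ} (hs : IsOpen s)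
    (hh : DifferentiableOn ℂ h s) (hg : DifferentiableOn ℂ g s)
    (hJ : ∀ z ∈ s, ‖deriv g z‖ < ‖deriv h z‖) :
    IsLocalHomeomorphOn (fun w => h w - g w) s := by
  have hJ' : ∀ z ∈ s, ‖deriv (fun _ => (0 : ℂ)) z‖ < ‖deriv (fun w => h w - g w) z‖ := by
    intro z hz
    rw [deriv_const, norm_zero, deriv_fun_sub (hh.differentiableAt (hs.mem_nhds hz))
      (hg.differentiableAt (hs.mem_nhds hz))]
    linarith [hJ z hz, norm_sub_norm_le (deriv h z) (deriv g z)]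
  simpa using isLocalHomeomorphOn_add_conj hs (hh.sub hg) (differentiableOn_const 0) hJ'

def IsUnionOfTwoCvxReDomains (Ω : Set ℂ) : Prop :=
  ∃ D₁ D₂ : Set ℂ, IsOpen D₁ ∧ IsConnected D₁ ∧ CvxRe D₁ ∧
    IsOpen D₂ ∧ IsConnected D₂ ∧ CvxRe D₂ ∧ (D₁ ∩ D₂).Nonempty ∧ Ω = D₁ ∪ D₂

lemma IsUnionOfTwoCvxReDomains.image {Ω : Set ℂ} {φ : ℂ → ℂ} (hΩ : IsUnionOfTwoCvxReDomains Ω)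
    (hφ_loc : IsLocalHomeomorphOn φ Ω) (hφ : ∀ w ∈ Ω, (φ w).im = w.im) :
    IsUnionOfTwoCvxReDomains (φ '' Ω) := by
  obtain ⟨D₁, D₂, hD₁o, hD₁c, hD₁, hD₂o, hD₂c, hD₂, ⟨w, hw₁, hw₂⟩, rfl⟩ := hΩ
  have hφc := hφ_loc.continuousOn
  refine ⟨φ '' D₁, φ '' D₂, hφ_loc.isOpen_image_of_subset hD₁o subset_union_left,
    hD₁c.image φ (hφc.mono subset_union_left),
    hD₁.image (hφc.mono subset_union_left) fun z hz => hφ z (Or.inl hz),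
    hφ_loc.isOpen_image_of_subset hD₂o subset_union_right,
    hD₂c.image φ (hφc.mono subset_union_right),
    hD₂.image (hφc.mono subset_union_right) fun z hz => hφ z (Or.inr hz),
    ⟨φ w, mem_image_of_mem φ hw₁, mem_image_of_mem φ hw₂⟩, image_union φ D₁ D₂⟩

theorem shear_generalization_forward
    (h g : ℂ → ℂ)
    (hh : DifferentiableOn ℂ h (ball (0 : ℂ) 1))
    (hg : DifferentiableOn ℂ g (ball (0 : ℂ) 1))
    (f : ℂ → ℂ) (hf : ∀ z, f z = h z + (starRingEnd ℂ) (g z))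
    (hJ : ∀ z ∈ ball (0 : ℂ) 1, ‖deriv g z‖ < ‖deriv h z‖)
    (hLy : Ly ((fun z => h z - g z) '' ball (0 : ℂ) 1) = Ly (f '' ball (0 : ℂ) 1))
    (hinj : Set.InjOn f (ball (0 : ℂ) 1))
    (hdec : ∃ D₁ D₂ : Set ℂ, IsOpen D₁ ∧ IsConnected D₁ ∧ CvxRe D₁ ∧
      IsOpen D₂ ∧ IsConnected D₂ ∧ CvxRe D₂ ∧ (D₁ ∩ D₂).Nonempty ∧
      f '' ball (0 : ℂ) 1 = D₁ ∪ D₂) :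
    Set.InjOn (fun z => h z - g z) (ball (0 : ℂ) 1) ∧
    ∃ Ω₁ Ω₂ : Set ℂ, IsOpen Ω₁ ∧ IsConnected Ω₁ ∧ CvxRe Ω₁ ∧
      IsOpen Ω₂ ∧ IsConnected Ω₂ ∧ CvxRe Ω₂ ∧ (Ω₁ ∩ Ω₂).Nonempty ∧
      (fun z => h z - g z) '' ball (0 : ℂ) 1 = Ω₁ ∪ Ω₂ := by
  set B := ball (0 : ℂ) 1
  set F := fun z => h z - g z
  have hf_loc : IsLocalHomeomorphOn f B := by
    simpa only [← hf] using isLocalHomeomorphOn_add_conj isOpen_ball hh hg hJ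
  set φ := F ∘ invFunOn f B
  have hφf : EqOn (φ ∘ f) F B := fun z hz => congrArg F (hinj.leftInvOn_invFunOn hz)
  have hφ_loc : IsLocalHomeomorphOn φ (f '' B) :=
    ((isLocalHomeomorphOn_sub isOpen_ball hh hg hJ).congr isOpen_ball hφf.symm).of_comp_right hf_loc
  have hφ_im : ∀ w ∈ f '' B, (φ w).im = w.im := by
    rintro _ ⟨z, hz, rfl⟩
    rw [← comp_apply (f := φ), hφf hz, hf]
    simp [F, sub_eq_add_neg]
  have hφ_image : φ '' (f '' B) = F '' B := by rw [← image_comp, hφf.image_eq]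
  have hφ_inj : InjOn φ (f '' B) := by
    obtain ⟨D₁, D₂, -, -, hD₁, -, -, hD₂, -, hΩ⟩ := hdec
    rw [hΩ] at hφ_loc hφ_im ⊢
    refine injOn_union_of_cvxRe hφ_loc.continuousOn hφ_im hφ_loc.locInjOn hD₁ hD₂ ?_
    rw [← hΩ, hφ_image, hLy]
  refine ⟨(hφ_inj.comp hinj (mapsTo_image f B)).congr hφf, ?_⟩
  rw [← hφ_image]
  exact IsUnionOfTwoCvxReDomains.image hdec hφ_loc hφ_im
end

section
/- Let D ⊆ ℂ be a domain convex in the direction of the real axis and p : D → ℝ a continuous real-valued function. Then the map w ↦ w + p(w) is injective on D if and only if it is locally injective on D; and in this case the image of D under w ↦ w + p(w) is convex in the direction of the real axis. -/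
open Complex Set Metric

open Filter Topology

/-! Along a horizontal line `Im w = y` the map `q w = w + p w` moves points horizontally,
acting on the real part by the continuous function `f x = x + p (x + i y)`. If `q z = q w` with
`z ≠ w`, then `z`, `w` lie on one line and `f` takes equal values at the ends of the segment
joining them, so (Rolle) `f` has an interior extremum; a continuous function is strictly
monotone on any interval where it is injective, hence `f`, and with it `q`, is not injective
near that extremum. The image of a horizontal segment under `q` is a horizontal set containing
the segment joining the images of its ends, by the intermediate value theorem. -/

theorem IsLocalExtr.not_injOn {f : ℝ → ℝ} {c : ℝ} {U : Set ℝ} (hext : IsLocalExtr f c)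
    (hU : U ∈ 𝓝 c) (hf : ContinuousOn f U) : ¬ InjOn f U := by
  intro hinj
  wlog hmax : IsLocalMax f c generalizing f
  · have hmin := hext.resolve_right hmax
    exact this (Or.inr hmin.neg) hf.neg (neg_injective.comp_injOn hinj) hmin.neg
  obtain ⟨ε, hε, hsub⟩ := nhds_basis_closedBall.mem_iff.1 (inter_mem hU hmax)
  rw [Real.closedBall_eq_Icc] at hsub
  have hIcc : Icc (c - ε) (c + ε) ⊆ U := fun x hx => (hsub hx).1
  have hc : c ∈ Icc (c - ε) (c + ε) := ⟨by linarith, by linarith⟩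
  have hleft : c - ε ∈ Icc (c - ε) (c + ε) := left_mem_Icc.2 (by linarith)
  have hright : c + ε ∈ Icc (c - ε) (c + ε) := right_mem_Icc.2 (by linarith)
  rcases (hf.mono hIcc).strictMonoOn_of_injOn_Icc' (by linarith) (hinj.mono hIcc) with h | h
  · exact (h hc hright (by linarith)).not_ge (hsub hright).2
  · exact (h hleft hc (by linarith)).not_ge (hsub hleft).2

theorem exists_mem_Ioo_forall_not_injOn {f : ℝ → ℝ} {a b : ℝ} (hab : a < b)
    (hf : ContinuousOn f (Icc a b)) (hfab : f a = f b) :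
    ∃ c ∈ Ioo a b, ∀ U ∈ 𝓝 c, ¬ InjOn f U := by
  obtain ⟨c, hc, hext⟩ := exists_Ioo_extr_on_Icc hab hf hfab
  have hIcc : Icc a b ∈ 𝓝 c := Icc_mem_nhds hc.1 hc.2
  exact ⟨c, hc, fun U hU hinj => (hext.isLocalExtr hIcc).not_injOn (inter_mem hU hIcc)
    (hf.mono inter_subset_right) (hinj.mono inter_subset_left)⟩

namespace Complex

theorem continuous_mk_left (y : ℝ) : Continuous fun x : ℝ => (⟨x, y⟩ : ℂ) :=
  equivRealProdCLM.symm.continuous.comp (continuous_id.prodMk continuous_const)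

theorem segment_eq_image_mk_of_im_eq {z w : ℂ} (h : z.im = w.im) :
    segment ℝ z w = (fun x : ℝ => (⟨x, z.im⟩ : ℂ)) '' uIcc z.re w.re := by
  rw [← segment_eq_uIcc, segment_eq_image', segment_eq_image', image_image]
  refine image_congr fun θ _ => ?_
  apply Complex.ext <;> simp [h]

end Complex

namespace CvxRe

variable {D : Set ℂ} {p : ℂ → ℝ} {z w : ℂ}

theorem mk_mem (hD : CvxRe D) (hz : z ∈ D) (hw : w ∈ D) (h : z.im = w.im) {x : ℝ}
    (hx : x ∈ uIcc z.re w.re) : (⟨x, z.im⟩ : ℂ) ∈ D :=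
  hD z hz w hw h <| by rw [segment_eq_image_mk_of_im_eq h]; exact mem_image_of_mem _ hx

theorem continuousOn_add_comp_mk (hD : CvxRe D) (hp : ContinuousOn p D)
    (hz : z ∈ D) (hw : w ∈ D) (h : z.im = w.im) :
    ContinuousOn (fun x : ℝ => x + p ⟨x, z.im⟩) (uIcc z.re w.re) :=
  continuousOn_id.add <|
    hp.comp (continuous_mk_left _).continuousOn fun _ hx => hD.mk_mem hz hw h hx

theorem injOn_of_locInjOn (hD : CvxRe D) (hp : ContinuousOn p D)
    (hl : LocInjOn (fun w => w + (p w : ℂ)) D) : InjOn (fun w => w + (p w : ℂ)) D := by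
  intro z hz w hw hq
  have him : z.im = w.im := by simpa using congrArg im hq
  by_contra hne
  wlog hlt : z.re < w.re generalizing z w
  · refine this hw hz hq.symm him.symm (Ne.symm hne) (lt_of_le_of_ne (not_lt.1 hlt) ?_)
    exact fun h => hne (Complex.ext h.symm him)
  set f : ℝ → ℝ := fun x => x + p ⟨x, z.im⟩
  have hf : ContinuousOn f (Icc z.re w.re) := by
    simpa [uIcc_of_lt hlt] using hD.continuousOn_add_comp_mk hp hz hw him
  have hw' : (⟨w.re, z.im⟩ : ℂ) = w := by rw [him]
  have hfzw : f z.re = f w.re := by simpa [f, hw'] using congrArg re hq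
  obtain ⟨c, hc, hnot⟩ := exists_mem_Ioo_forall_not_injOn hlt hf hfzw
  have hcD : (⟨c, z.im⟩ : ℂ) ∈ D :=
    hD.mk_mem hz hw him (uIcc_of_lt hlt ▸ Ioo_subset_Icc_self hc)
  obtain ⟨U, hU, hinj⟩ := hl _ hcD
  have hline : Tendsto (fun x : ℝ => (⟨x, z.im⟩ : ℂ)) (𝓝 c) (𝓝[D] ⟨c, z.im⟩) := by
    refine tendsto_nhdsWithin_iff.2 ⟨(continuous_mk_left _).tendsto c, ?_⟩
    filter_upwards [Icc_mem_nhds hc.1 hc.2] with x hx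
    exact hD.mk_mem hz hw him (uIcc_of_lt hlt ▸ hx)
  refine hnot _ (hline hU) fun x hx y hy hxy => ?_
  simpa using congrArg re (hinj hx hy (Complex.ext (by simpa using hxy) (by simp)))

theorem image_add_ofReal (hD : CvxRe D) (hp : ContinuousOn p D) :
    CvxRe ((fun w => w + (p w : ℂ)) '' D) := by
  rintro _ ⟨z, hz, rfl⟩ _ ⟨w, hw, rfl⟩ him' _ hu
  have him : z.im = w.im := by simpa using him'
  have hw' : (⟨w.re, z.im⟩ : ℂ) = w := by rw [him]
  rw [segment_eq_image_mk_of_im_eq him'] at hu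
  obtain ⟨t, ht, rfl⟩ := hu
  obtain ⟨x, hx, hfx⟩ := intermediate_value_uIcc
    (hD.continuousOn_add_comp_mk hp hz hw him) (by simpa [hw'] using ht)
  exact ⟨⟨x, z.im⟩, hD.mk_mem hz hw him hx, Complex.ext (by simpa using hfx) (by simp)⟩

end CvxRe

theorem clunie_sheil_small_lemma_general
    (D : Set ℂ) (hx : CvxRe D)
    (p : ℂ → ℝ) (hp : ContinuousOn p D) :
    (Set.InjOn (fun w => w + (p w : ℂ)) D ↔
      LocInjOn (fun w => w + (p w : ℂ)) D) ∧
    (Set.InjOn (fun w => w + (p w : ℂ)) D →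
      CvxRe ((fun w => w + (p w : ℂ)) '' D)) :=
  ⟨⟨fun h _ _ => ⟨D, self_mem_nhdsWithin, h⟩, hx.injOn_of_locInjOn hp⟩,
    fun _ => hx.image_add_ofReal hp⟩

theorem clunie_sheil_small_lemma
    (D : Set ℂ) (ho : IsOpen D) (hc : IsConnected D) (hx : CvxRe D)
    (p : ℂ → ℝ) (hp : ContinuousOn p D) :
    (Set.InjOn (fun w => w + (p w : ℂ)) D ↔
      LocInjOn (fun w => w + (p w : ℂ)) D) ∧
    (Set.InjOn (fun w => w + (p w : ℂ)) D →
      CvxRe ((fun w => w + (p w : ℂ)) '' D)) :=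
  clunie_sheil_small_lemma_general D hx p hp
end

section
/- Define f(z) = h(z) + conj(g(z)) where h(z) = (−6iz − 3z² + iz³)/(6(i+z)³) and g(z) = (3z² + iz³)/(6(i+z)³). Then f(√3/3) = f(−√3/3) = 3i/8; in particular, f is not injective on the unit disk. -/
open Complex Set Metric

/-! On the real axis `f = Re (h + g) + i Im (h - g)` has the closed form
`f x = x (3 - x²)(1 - 3x²) / (3 (1 + x²)³) + i · 2x² / (1 + x²)²`: an odd real part that
vanishes at `x = ±1/√3` and an even imaginary part. Hence `f (1/√3) = f (-1/√3) = 3i/8`,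
and both points lie in the unit disk. -/

section KoebeShear

variable {h g f : ℂ → ℂ}
  (hh : ∀ z, h z = (-6 * I * z - 3 * z ^ 2 + I * z ^ 3) / (6 * (I + z) ^ 3))
  (hg : ∀ z, g z = (3 * z ^ 2 + I * z ^ 3) / (6 * (I + z) ^ 3))
  (hf : ∀ z, f z = h z + (starRingEnd ℂ) (g z))
include hh hg hf

lemma koebe_shear_apply_ofReal (x : ℝ) :
    f x = x * (3 - x ^ 2) * (1 - 3 * x ^ 2) / (3 * (1 + x ^ 2) ^ 3)
      + 2 * x ^ 2 / (1 + x ^ 2) ^ 2 * I := by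
  have hplus : I + (x : ℂ) ≠ 0 := fun h0 => by simpa using congrArg im h0
  have hminus : -I + (x : ℂ) ≠ 0 := fun h0 => by simpa using congrArg im h0
  have hnorm : 1 + (x : ℂ) ^ 2 = (I + x) * (-I + x) := by linear_combination I_sq
  rw [hf, hh, hg, map_div₀]
  simp only [map_add, map_mul, map_pow, map_ofNat, conj_I, conj_ofReal]
  rw [hnorm]
  field_simp
  ring_nf
  simp only [I_sq, I_pow_four]
  ring

lemma koebe_shear_apply_of_three_mul_sq_eq_one {x : ℝ} (hx : 3 * x ^ 2 = 1) :
    f x = 3 * I / 8 := by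
  have hx' : (x : ℂ) ^ 2 = 1 / 3 := by
    rw [eq_div_iff three_ne_zero, mul_comm]
    exact_mod_cast hx
  rw [koebe_shear_apply_ofReal hh hg hf, hx']
  ring

end KoebeShear

lemma three_mul_sq_sqrt_three_div_three : 3 * (Real.sqrt 3 / 3) ^ 2 = 1 := by
  rw [div_pow, Real.sq_sqrt (by norm_num : (0 : ℝ) ≤ 3)]
  norm_num

lemma abs_sqrt_three_div_three_lt_one : |Real.sqrt 3 / 3| < 1 := by
  have hsqrt : Real.sqrt 3 < 3 := by
    rw [Real.sqrt_lt' (by norm_num)]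
    norm_num
  rw [abs_of_nonneg (by positivity)]
  linarith

theorem shear_koebe_not_injective
    (h g f : ℂ → ℂ)
    (hh : ∀ z, h z = (-6 * I * z - 3 * z ^ 2 + I * z ^ 3) / (6 * (I + z) ^ 3))
    (hg : ∀ z, g z = (3 * z ^ 2 + I * z ^ 3) / (6 * (I + z) ^ 3))
    (hf : ∀ z, f z = h z + (starRingEnd ℂ) (g z)) :
    f ((Real.sqrt 3 / 3 : ℝ) : ℂ) = 3 * I / 8 ∧
    f ((-(Real.sqrt 3) / 3 : ℝ) : ℂ) = 3 * I / 8 ∧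
    ¬ Set.InjOn f (ball (0 : ℂ) 1) := by
  set a : ℝ := Real.sqrt 3 / 3
  have ha : 3 * a ^ 2 = 1 := three_mul_sq_sqrt_three_div_three
  have ha_lt : |a| < 1 := abs_sqrt_three_div_three_lt_one
  have hfa : f a = 3 * I / 8 := koebe_shear_apply_of_three_mul_sq_eq_one hh hg hf ha
  have hfna : f (-a : ℝ) = 3 * I / 8 :=
    koebe_shear_apply_of_three_mul_sq_eq_one hh hg hf (by rwa [neg_sq])
  refine ⟨hfa, neg_div 3 (Real.sqrt 3) ▸ hfna, fun hinj => ?_⟩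
  have hmem : ∀ b : ℝ, |b| < 1 → (b : ℂ) ∈ ball (0 : ℂ) 1 := fun b hb => by
    simpa [norm_real] using hb
  have ha_eq : (a : ℂ) = (-a : ℝ) :=
    hinj (hmem a ha_lt) (hmem (-a) (by rwa [abs_neg])) (hfa.trans hfna.symm)
  have ha_pos : 0 < a := by positivity
  linarith [ofReal_injective ha_eq]
end

section
/- Let u > 0 and v ∈ ℝ, and set F(u,v) := −(1/6)v(3u² − v²) − (i/4)(u² − v² − 1). Then the image of the right half-plane {u > 0} under F equals ℂ \ {i/4}. -/
open Complex Set Metric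

lemma cubic_neg (c x : ℝ) (hx : x < 0) :
    ∃ v : ℝ, 2*v^3 + 3*c*v + 6*x = 0 ∧ 0 < v^2 + c := by
  set s := Real.sqrt (max (-c) 0) with hsdef
  have hs0 : 0 ≤ s := Real.sqrt_nonneg _
  have hs2 : s^2 = max (-c) 0 := Real.sq_sqrt (le_max_right _ _)
  have hsc : -c ≤ s^2 := hs2 ▸ le_max_left _ _
  have hps : 2*s^3 + 3*c*s + 6*x < 0 := by
    rcases le_or_gt c 0 with h | h
    · have h2 : s^2 = -c := by rw [hs2, max_eq_left (by linarith)]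
      nlinarith
    · have h0 : s = 0 := by
        rw [hsdef, max_eq_right (by linarith : (-c:ℝ) ≤ 0), Real.sqrt_zero]
      rw [h0]; nlinarith
  set B := max s 3 + |c| + |x| with hBdef
  have habsc : 0 ≤ |c| := abs_nonneg c
  have habsx : 0 ≤ |x| := abs_nonneg x
  have hB3 : 3 ≤ B := by
    have := le_max_right s 3; simp only [hBdef]; linarith
  have hBs : s ≤ B := by
    have := le_max_left s 3; simp only [hBdef]; linarith
  have hcB : -B ≤ c := by
    have h1 : (0:ℝ) ≤ max s 3 := le_trans (by norm_num) (le_max_right s 3)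
    have h2 := neg_abs_le c
    simp only [hBdef]; linarith
  have hxB : -B ≤ x := by
    have h1 : (0:ℝ) ≤ max s 3 := le_trans (by norm_num) (le_max_right s 3)
    have h2 := neg_abs_le x
    simp only [hBdef]; linarith
  have hpB : 0 ≤ 2*B^3 + 3*c*B + 6*x := by
    have hq : (0:ℝ) ≤ 2*B^2 - 3*B - 6 := by nlinarith
    have hq2 : (0:ℝ) ≤ B * (2*B^2 - 3*B - 6) :=
      mul_nonneg (by linarith) hq
    have hcc : 0 ≤ (c + B) * B := mul_nonneg (by linarith) (by linarith)
    nlinarith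
  have hcont : ContinuousOn (fun v : ℝ => 2*v^3 + 3*c*v + 6*x) (Icc s B) :=
    (by continuity : Continuous fun v : ℝ => 2*v^3 + 3*c*v + 6*x).continuousOn
  obtain ⟨v, hv, hv0⟩ := intermediate_value_Icc hBs hcont ⟨le_of_lt hps, hpB⟩
  simp only at hv0
  refine ⟨v, hv0, ?_⟩
  have hvs : s < v := by
    refine lt_of_le_of_ne hv.1 ?_
    intro h
    rw [h] at hps
    linarith
  nlinarith [mul_pos (sub_pos.mpr hvs) (by linarith : (0:ℝ) < v + s)]

lemma cubic_exists (c x : ℝ) (h : x ≠ 0 ∨ c ≠ 0) :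
    ∃ v : ℝ, 2*v^3 + 3*c*v + 6*x = 0 ∧ 0 < v^2 + c := by
  rcases lt_trichotomy x 0 with hx | hx | hx
  · exact cubic_neg c x hx
  · have hc : c ≠ 0 := h.resolve_left (not_not_intro hx)
    rcases lt_or_gt_of_ne hc with hc | hc
    · refine ⟨Real.sqrt (-3*c/2), ?_, ?_⟩
      · have h2 : Real.sqrt (-3*c/2)^2 = -3*c/2 := Real.sq_sqrt (by linarith)
        have h3 : (2:ℝ)*Real.sqrt (-3*c/2)^3 + 3*c*Real.sqrt (-3*c/2) + 6*x
            = Real.sqrt (-3*c/2) * (2*Real.sqrt (-3*c/2)^2 + 3*c) + 6*x := by ring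
        rw [h3, h2, hx]; ring
      · have h2 : Real.sqrt (-3*c/2)^2 = -3*c/2 := Real.sq_sqrt (by linarith)
        rw [h2]; linarith
    · exact ⟨0, by rw [hx]; ring, by simpa using hc⟩
  · obtain ⟨v, hv, hv2⟩ := cubic_neg c (-x) (by linarith)
    exact ⟨-v, by linear_combination -hv, by rw [neg_sq]; exact hv2⟩

lemma expr_eq (u v : ℝ) :
    -(1 / 6 : ℂ) * (v * (3 * u ^ 2 - v ^ 2)) -
        (I / 4) * ((u : ℂ) ^ 2 - (v : ℂ) ^ 2 - 1)
      = ((-(v * (3 * u ^ 2 - v ^ 2)) / 6 : ℝ) : ℂ)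
        + ((-(u ^ 2 - v ^ 2 - 1) / 4 : ℝ) : ℂ) * I := by
  push_cast; ring

lemma re_im_eq {a b a' b' : ℝ} (h : (a:ℂ) + (b:ℂ)*I = (a':ℂ) + (b':ℂ)*I) :
    a = a' ∧ b = b' := by
  have h1 := congrArg Complex.re h
  have h2 := congrArg Complex.im h
  simp at h1 h2
  exact ⟨h1, h2⟩

theorem image_of_halfplane_omits_one_point :
    {w : ℂ | ∃ u v : ℝ, 0 < u ∧
        w = -(1 / 6 : ℂ) * (v * (3 * u ^ 2 - v ^ 2)) -
            (I / 4) * ((u : ℂ) ^ 2 - (v : ℂ) ^ 2 - 1)} =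
      {I / 4}ᶜ := by
  have h4 : (I/4 : ℂ) = ((0:ℝ):ℂ) + ((1/4:ℝ):ℂ)*I := by push_cast; ring
  ext w
  simp only [mem_setOf_eq, mem_compl_iff, mem_singleton_iff]
  constructor
  · rintro ⟨u, v, hu, rfl⟩ h
    rw [expr_eq, h4] at h
    obtain ⟨e1, e2⟩ := re_im_eq h
    have hu2 : u^2 = v^2 := by linarith
    have hv3 : v^3 = 0 := by linear_combination (-3)*e1 - (3*v/2)*hu2
    have hv0 : v = 0 := by
      exact pow_eq_zero_iff (by norm_num) |>.mp hv3
    rw [hv0] at hu2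
    nlinarith
  · intro hw
    set x := w.re with hxw
    set y := w.im with hyw
    have hne : x ≠ 0 ∨ (1 - 4*y) ≠ 0 := by
      by_contra hcon
      push_neg at hcon
      apply hw
      rw [h4]
      rw [← Complex.re_add_im w, ← hxw, ← hyw]
      have hy : y = 1/4 := by linarith [hcon.2]
      rw [hcon.1, hy]
    obtain ⟨v, hv, hv2⟩ := cubic_exists (1 - 4*y) x hne
    set u := Real.sqrt (v^2 + (1 - 4*y)) with hudef
    have hupos : 0 < u := Real.sqrt_pos.mpr hv2
    have hu2 : u^2 = v^2 + (1 - 4*y) := Real.sq_sqrt hv2.le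
    refine ⟨u, v, hupos, ?_⟩
    have ha : x = -(v * (3 * u ^ 2 - v ^ 2)) / 6 := by
      linear_combination hv/6 + (v/2)*hu2
    have hb : y = -(u ^ 2 - v ^ 2 - 1) / 4 := by linarith
    calc w = (x:ℂ) + (y:ℂ)*I := (Complex.re_add_im w).symm
    _ = ((-(v * (3 * u ^ 2 - v ^ 2)) / 6 : ℝ) : ℂ)
        + ((-(u ^ 2 - v ^ 2 - 1) / 4 : ℝ) : ℂ) * I := by rw [ha, hb]
    _ = -(1 / 6 : ℂ) * (v * (3 * u ^ 2 - v ^ 2)) -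
            (I / 4) * ((u : ℂ) ^ 2 - (v : ℂ) ^ 2 - 1) := (expr_eq u v).symm
end

section
/- Let D₁, D₂ ⊆ ℂ be domains convex in the direction of the real axis with D₁ ∩ D₂ = ∅, and let q : D₁ ∪ D₂ → ℂ be continuous with Im q(z) = Im z for all z. If q is locally injective on D₁ ∪ D₂ and P_y(q(D₁) ∩ q(D₂)) = ∅, then q is injective on D₁ ∪ D₂. -/
open Complex Set Metric

/-!
Along a horizontal line `Im z = a` the map `q` keeps the height, so it is injective on the slice
of `D` at height `a` as soon as `x ↦ Re q (x + a i)` is. That slice is an interval, and a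
continuous locally injective function on an interval is injective: otherwise it takes equal
values at two points, hence has an interior extremum (Rolle), while near that point it is
continuous and injective, hence strictly monotone. Points of `D₁` and `D₂` cannot have the same
image, since `q(D₁) ∩ q(D₂)` has empty projection and is therefore empty.
-/

open Filter Topology

lemma not_isExtrOn_of_injOn {f : ℝ → ℝ} {s : Set ℝ} {c : ℝ} (hs : s ∈ 𝓝 c)
    (hf : ContinuousOn f s) (hinj : InjOn f s) : ¬IsExtrOn f s c := by
  obtain ⟨b, d, -, hbd_nhds, hbd⟩ := exists_Icc_mem_subset_of_mem_nhds hs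
  obtain ⟨hbc, hcd⟩ := Icc_mem_nhds_iff.1 hbd_nhds
  have hb : b ∈ Icc b d := left_mem_Icc.2 (hbc.trans hcd).le
  have hc : c ∈ Icc b d := ⟨hbc.le, hcd.le⟩
  have hd : d ∈ Icc b d := right_mem_Icc.2 (hbc.trans hcd).le
  have hmono_or_anti :=
    (hf.mono hbd).strictMonoOn_of_injOn_Icc' (hbc.trans hcd).le (hinj.mono hbd)
  rintro (hmin | hmax) <;> rcases hmono_or_anti with hmono | hanti
  · exact (hmono hb hc hbc).not_ge (hmin (hbd hb))
  · exact (hanti hc hd hcd).not_ge (hmin (hbd hd))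
  · exact (hmono hc hd hcd).not_ge (hmax (hbd hd))
  · exact (hanti hb hc hbc).not_ge (hmax (hbd hb))

theorem Set.OrdConnected.injOn_of_locallyInjOn {S : Set ℝ} (hS : S.OrdConnected) {f : ℝ → ℝ}
    (hf : ContinuousOn f S) (hloc : ∀ x ∈ S, ∃ U ∈ 𝓝[S] x, InjOn f U) : InjOn f S := by
  suffices h : ∀ a ∈ S, ∀ b ∈ S, a < b → f a ≠ f b by
    intro a ha b hb hab
    by_contra hne
    rcases lt_or_gt_of_ne hne with hlt | hgt
    · exact h a ha b hb hlt hab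
    · exact h b hb a ha hgt hab.symm
  intro a ha b hb hab hfab
  have hIcc : Icc a b ⊆ S := hS.out ha hb
  obtain ⟨c, hc, hext⟩ := exists_Ioo_extr_on_Icc hab (hf.mono hIcc) hfab
  have hIcc_nhds : Icc a b ∈ 𝓝 c := Icc_mem_nhds hc.1 hc.2
  obtain ⟨U, hU, hinj⟩ := hloc c (hIcc (Ioo_subset_Icc_self hc))
  rw [nhdsWithin_eq_nhds.2 (mem_of_superset hIcc_nhds hIcc)] at hU
  exact not_isExtrOn_of_injOn (inter_mem hU hIcc_nhds) (hf.mono (inter_subset_right.trans hIcc))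
    (hinj.mono inter_subset_left) (hext.on_subset inter_subset_right)

/-- `x ↦ x + a i`, as an affine map so that it carries segments to segments. -/
noncomputable def horizontalLine (a : ℝ) : ℝ →ᵃ[ℝ] ℂ :=
  AffineMap.lineMap (a * I) (a * I + 1)

@[simp] lemma horizontalLine_re (a x : ℝ) : (horizontalLine a x).re = x := by
  simp [horizontalLine, AffineMap.lineMap_apply]

@[simp] lemma horizontalLine_im (a x : ℝ) : (horizontalLine a x).im = a := by
  simp [horizontalLine, AffineMap.lineMap_apply]

lemma horizontalLine_re_of_im_eq {z : ℂ} {a : ℝ} (h : z.im = a) : horizontalLine a z.re = z :=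
  Complex.ext (by simp) (by simp [h])

lemma continuous_horizontalLine (a : ℝ) : Continuous (horizontalLine a) :=
  AffineMap.lineMap_continuous

lemma CvxRe.ordConnected_preimage_horizontalLine {D : Set ℂ} (hD : CvxRe D) (a : ℝ) :
    (horizontalLine a ⁻¹' D).OrdConnected := by
  refine ⟨fun x hx y hy u hu => ?_⟩
  have hseg : horizontalLine a '' segment ℝ x y ⊆ D := by
    rw [image_segment]
    exact hD _ hx _ hy (by simp)
  exact hseg (mem_image_of_mem _ (segment_eq_Icc (hu.1.trans hu.2) ▸ hu))

lemma LocInjOn.mono {q : ℂ → ℂ} {D E : Set ℂ} (h : LocInjOn q E) (hDE : D ⊆ E) :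
    LocInjOn q D := fun z hz =>
  let ⟨U, hU, hinj⟩ := h z (hDE hz)
  ⟨U, nhdsWithin_mono z hDE hU, hinj⟩

lemma LocInjOn.re_comp_horizontalLine {q : ℂ → ℂ} {D : Set ℂ} (hloc : LocInjOn q D)
    (him : ∀ z ∈ D, (q z).im = z.im) (a : ℝ) :
    ∀ x ∈ horizontalLine a ⁻¹' D, ∃ U ∈ 𝓝[horizontalLine a ⁻¹' D] x,
      InjOn (fun x => (q (horizontalLine a x)).re) U := by
  intro x hx
  obtain ⟨U, hU, hinj⟩ := hloc _ hx
  refine ⟨horizontalLine a ⁻¹' (U ∩ D), ?_, fun x₁ hx₁ x₂ hx₂ hre => ?_⟩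
  · exact (continuous_horizontalLine a).continuousWithinAt.tendsto_nhdsWithin
      (mapsTo_preimage _ _) (inter_mem hU self_mem_nhdsWithin)
  · have hq : q (horizontalLine a x₁) = q (horizontalLine a x₂) :=
      Complex.ext hre (by simp only [him _ hx₁.2, him _ hx₂.2, horizontalLine_im])
    simpa using congrArg Complex.re (hinj hx₁.1 hx₂.1 hq)

theorem CvxRe.injOn_of_locInjOn_s19 {D : Set ℂ} (hD : CvxRe D) {q : ℂ → ℂ}
    (hq : ContinuousOn q D) (him : ∀ z ∈ D, (q z).im = z.im) (hloc : LocInjOn q D) :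
    InjOn q D := by
  intro z hz w hw hqzw
  have him_eq : w.im = z.im := by rw [← him w hw, ← hqzw, him z hz]
  have hz' : horizontalLine z.im z.re = z := horizontalLine_re_of_im_eq rfl
  have hw' : horizontalLine z.im w.re = w := horizontalLine_re_of_im_eq him_eq
  have hre_inj := (hD.ordConnected_preimage_horizontalLine z.im).injOn_of_locallyInjOn
    (continuous_re.comp_continuousOn
      (hq.comp (continuous_horizontalLine _).continuousOn (mapsTo_preimage _ _)))
    (hloc.re_comp_horizontalLine him z.im)
  have hre : z.re = w.re :=
    hre_inj (by rwa [mem_preimage, hz']) (by rwa [mem_preimage, hw'])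
      (by simp only [Function.comp_apply, hz', hw', hqzw])
  exact Complex.ext hre him_eq.symm

lemma Py_eq_empty_iff {D : Set ℂ} : Py D = ∅ ↔ D = ∅ := image_eq_empty

theorem disjoint_domains_injective_general
    (D₁ D₂ : Set ℂ) (h₁x : CvxRe D₁) (h₂x : CvxRe D₂)
    (q : ℂ → ℂ) (hq : ContinuousOn q (D₁ ∪ D₂))
    (him : ∀ z ∈ D₁ ∪ D₂, (q z).im = z.im)
    (hloc : LocInjOn q (D₁ ∪ D₂))
    (hproj : Py (q '' D₁ ∩ q '' D₂) = ∅) :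
    Set.InjOn q (D₁ ∪ D₂) := by
  have himg : Disjoint (q '' D₁) (q '' D₂) :=
    disjoint_iff_inter_eq_empty.2 (Py_eq_empty_iff.1 hproj)
  refine (injOn_union himg.of_image).2 ⟨?_, ?_, fun z hz w hw =>
    himg.ne_of_mem (mem_image_of_mem q hz) (mem_image_of_mem q hw)⟩
  · exact h₁x.injOn_of_locInjOn_s19 (hq.mono subset_union_left)
      (fun z hz => him z (Or.inl hz)) (hloc.mono subset_union_left)
  · exact h₂x.injOn_of_locInjOn_s19 (hq.mono subset_union_right)
      (fun z hz => him z (Or.inr hz)) (hloc.mono subset_union_right)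

theorem disjoint_domains_injective
    (D₁ D₂ : Set ℂ) (h₁o : IsOpen D₁) (h₁c : IsConnected D₁) (h₁x : CvxRe D₁)
    (h₂o : IsOpen D₂) (h₂c : IsConnected D₂) (h₂x : CvxRe D₂)
    (hdisj : D₁ ∩ D₂ = ∅)
    (q : ℂ → ℂ) (hq : ContinuousOn q (D₁ ∪ D₂))
    (him : ∀ z ∈ D₁ ∪ D₂, (q z).im = z.im)
    (hloc : LocInjOn q (D₁ ∪ D₂))
    (hproj : Py (q '' D₁ ∩ q '' D₂) = ∅) :
    Set.InjOn q (D₁ ∪ D₂) :=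
  disjoint_domains_injective_general D₁ D₂ h₁x h₂x q hq him hloc hproj
end
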